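/- arXiv:math/0411389 — 10 statements merged into one kernel-verified Lean document; each statement's English description precedes it below -/
import Mathlib

section
/- Let D(g) be the Drinfel'd double Lie algebra of a finite-dimensional real Lie bialgebra with structure constants (f, c) satisfying the compatibility condition, with basis {x^1,...,x^n, X_1,...,X_n} and brackets [x^i,x^j] = f^{ij}_k x^k, [X_i,X_j] = c^k_{ij} X_k, [x^i,X_j] = c^i_{jk} x^k − f^{ik}_j X_k. Then the element C = Σ_i (ι(x^i)·ι(X_i) + ι(X_i)·ι(x^i)) of the universal enveloping algebra U(D(g)), where ι : D(g) → U(D(g)) is the canonical embedding, is central in U(D(g)); i.e., C is a Casimir operator of the Drinfel'd double algebra. -/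
/-!
The pairing of `D(g) = g ⊕ g*` with `⟨x^i, X_j⟩ = δ_ij` and `g`, `g*` isotropic is invariant:
this is exactly what the shape of the mixed bracket `[x^i, X_j]` encodes. For bases `e`, `e'`
dual under an invariant pairing, the terms of
`[y, Σ_s e_s e'_s] = Σ_s ([y, e_s] e'_s + e_s [y, e'_s])` cancel in pairs, so `Σ_s e_s e'_s`
commutes with the generators of the enveloping algebra and is therefore central; here
`e' = (X_i, x^i)` is dual to `e = (x^i, X_i)`.
-/

section CasimirElement

attribute [local instance] LieRing.ofAssociativeRing LieAlgebra.ofAssociativeAlgebra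

variable {R L A ι : Type*} [CommRing R] [LieRing L] [LieAlgebra R L] [Ring A] [Algebra R A]
  [Fintype ι]

theorem LieHom.map_eq_sum_repr_smul (φ : L →ₗ⁅R⁆ A) (e : Module.Basis ι R L) (v : L) :
    φ v = ∑ t, e.repr v t • φ (e t) := by
  conv_lhs => rw [← e.sum_repr v]
  simp only [map_sum, map_smul]

theorem LieHom.map_lie_eq_commutator (φ : L →ₗ⁅R⁆ A) (x y : L) :
    φ ⁅x, y⁆ = φ x * φ y - φ y * φ x := by
  rw [LieHom.map_lie, Ring.lie_def]

/-- The hypothesis says that `ad y` is skew for the pairing in which `e'` is dual to `e`. -/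
theorem LieHom.commute_sum_mul_of_repr_lie_eq_neg (φ : L →ₗ⁅R⁆ A) (e e' : Module.Basis ι R L)
    (y : L) (h : ∀ s t, e.repr ⁅y, e s⁆ t = -e'.repr ⁅y, e' t⁆ s) :
    Commute (∑ s, φ (e s) * φ (e' s)) (φ y) := by
  rw [commute_iff_eq, eq_comm, ← sub_eq_zero]
  calc φ y * ∑ s, φ (e s) * φ (e' s) - (∑ s, φ (e s) * φ (e' s)) * φ y
      = ∑ s, (φ ⁅y, e s⁆ * φ (e' s) + φ (e s) * φ ⁅y, e' s⁆) := by
        simp only [LieHom.map_lie_eq_commutator, Finset.mul_sum, Finset.sum_mul,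
          ← Finset.sum_sub_distrib]
        exact Finset.sum_congr rfl fun s _ => by noncomm_ring
    _ = ∑ s, ∑ t, (e.repr ⁅y, e s⁆ t + e'.repr ⁅y, e' t⁆ s) • (φ (e t) * φ (e' s)) := by
        simp only [add_smul, Finset.sum_add_distrib]
        congr 1
        · refine Finset.sum_congr rfl fun s _ => ?_
          rw [φ.map_eq_sum_repr_smul e ⁅y, e s⁆, Finset.sum_mul]
          simp only [smul_mul_assoc]
        · rw [Finset.sum_comm]
          refine Finset.sum_congr rfl fun t _ => ?_
          rw [φ.map_eq_sum_repr_smul e' ⁅y, e' t⁆, Finset.mul_sum]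
          simp only [mul_smul_comm]
    _ = 0 := by simp only [h, neg_add_cancel, zero_smul, Finset.sum_const_zero]

theorem LieHom.commute_sum_mul_of_repr_lie_basis_eq_neg (φ : L →ₗ⁅R⁆ A)
    (e e' : Module.Basis ι R L) (h : ∀ r s t, e.repr ⁅e r, e s⁆ t = -e'.repr ⁅e r, e' t⁆ s)
    (y : L) : Commute (∑ s, φ (e s) * φ (e' s)) (φ y) := by
  rw [φ.map_eq_sum_repr_smul e y]
  exact Commute.sum_right _ _ _ fun r _ =>
    (φ.commute_sum_mul_of_repr_lie_eq_neg e e' (e r) (h r)).smul_right _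

end CasimirElement

namespace UniversalEnvelopingAlgebra

variable {R L : Type*} [CommRing R] [LieRing L] [LieAlgebra R L]

theorem adjoin_range_ι :
    Algebra.adjoin R (Set.range (ι R : L → UniversalEnvelopingAlgebra R L)) = ⊤ := by
  have hrange : Set.range (ι R : L → UniversalEnvelopingAlgebra R L) =
      mkAlgHom R L '' Set.range (TensorAlgebra.ι R) := by
    rw [← Set.range_comp]
    rfl
  rw [hrange, Algebra.adjoin_image, TensorAlgebra.adjoin_range_ι, Algebra.map_top,
    AlgHom.range_eq_top]
  exact RingCon.mkₐ_surjective _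

theorem commute_of_forall_commute_ι {a : UniversalEnvelopingAlgebra R L}
    (h : ∀ y : L, Commute a (ι R y)) (u : UniversalEnvelopingAlgebra R L) : Commute a u :=
  Algebra.commute_of_mem_adjoin_of_forall_mem_commute (s := Set.range (ι R))
    (by rw [adjoin_range_ι]; trivial) (by rintro _ ⟨y, rfl⟩; exact h y)

end UniversalEnvelopingAlgebra

namespace DrinfeldDouble

variable {R L : Type*} [CommRing R] [LieRing L] [LieAlgebra R L] {n : ℕ}
  {f c : Fin n → Fin n → Fin n → R} {b : Module.Basis (Fin n ⊕ Fin n) R L}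

theorem lie_inl_coeff_antisymm
    (hxx : ∀ i j, ⁅b (Sum.inl i), b (Sum.inl j)⁆ = ∑ k, f i j k • b (Sum.inl k)) (i j k : Fin n) :
    f i j k = -f j i k := by
  have h := congrArg (fun v => b.repr v (Sum.inl k)) (lie_skew (b (Sum.inl i)) (b (Sum.inl j)))
  simpa [hxx, Finsupp.single_apply] using h.symm

theorem lie_inr_coeff_antisymm
    (hXX : ∀ i j, ⁅b (Sum.inr i), b (Sum.inr j)⁆ = ∑ k, c k i j • b (Sum.inr k)) (i j k : Fin n) :
    c k i j = -c k j i := by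
  have h := congrArg (fun v => b.repr v (Sum.inr k)) (lie_skew (b (Sum.inr i)) (b (Sum.inr j)))
  simpa [hXX, Finsupp.single_apply] using h.symm

/-- Invariance of the pairing `⟨x^i, X_j⟩ = δ_ij`, `⟨x, x⟩ = ⟨X, X⟩ = 0`, in coordinates. -/
theorem repr_lie_eq_neg_repr_lie_swap
    (hxx : ∀ i j, ⁅b (Sum.inl i), b (Sum.inl j)⁆ = ∑ k, f i j k • b (Sum.inl k))
    (hXX : ∀ i j, ⁅b (Sum.inr i), b (Sum.inr j)⁆ = ∑ k, c k i j • b (Sum.inr k))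
    (hxX : ∀ i j, ⁅b (Sum.inl i), b (Sum.inr j)⁆ =
      (∑ k, c i j k • b (Sum.inl k)) - ∑ k, f i k j • b (Sum.inr k)) (r s t : Fin n ⊕ Fin n) :
    b.repr ⁅b r, b s⁆ t = -b.repr ⁅b r, b t.swap⁆ s.swap := by
  have hXx : ∀ i j, ⁅b (Sum.inr i), b (Sum.inl j)⁆ = -⁅b (Sum.inl j), b (Sum.inr i)⁆ :=
    fun i j => (lie_skew _ _).symm
  rcases r with i | i <;> rcases s with j | j <;> rcases t with k | k <;>
    simp [hxx, hXX, hxX, hXx, Finsupp.single_apply]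
  exacts [lie_inr_coeff_antisymm hXX j k i, lie_inl_coeff_antisymm hxx j k i]

end DrinfeldDouble

theorem double_casimir_central_general (n : ℕ) (f c : Fin n → Fin n → Fin n → ℝ)
    (L : Type) [LieRing L] [LieAlgebra ℝ L]
    (b : Module.Basis (Fin n ⊕ Fin n) ℝ L)
    (hxx : ∀ i j, ⁅b (Sum.inl i), b (Sum.inl j)⁆ = ∑ k, f i j k • b (Sum.inl k))
    (hXX : ∀ i j, ⁅b (Sum.inr i), b (Sum.inr j)⁆ = ∑ k, c k i j • b (Sum.inr k))
    (hxX : ∀ i j, ⁅b (Sum.inl i), b (Sum.inr j)⁆ =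
      (∑ k, c i j k • b (Sum.inl k)) - ∑ k, f i k j • b (Sum.inr k)) :
    ∀ u : UniversalEnvelopingAlgebra ℝ L,
      (∑ i : Fin n,
        (UniversalEnvelopingAlgebra.ι ℝ (b (Sum.inl i)) *
            UniversalEnvelopingAlgebra.ι ℝ (b (Sum.inr i)) +
          UniversalEnvelopingAlgebra.ι ℝ (b (Sum.inr i)) *
            UniversalEnvelopingAlgebra.ι ℝ (b (Sum.inl i)))) * u =
      u * (∑ i : Fin n,
        (UniversalEnvelopingAlgebra.ι ℝ (b (Sum.inl i)) *
            UniversalEnvelopingAlgebra.ι ℝ (b (Sum.inr i)) +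
          UniversalEnvelopingAlgebra.ι ℝ (b (Sum.inr i)) *
            UniversalEnvelopingAlgebra.ι ℝ (b (Sum.inl i)))) := by
  intro u
  set b' := b.reindex (Equiv.sumComm _ _)
  have hdual (r s t : Fin n ⊕ Fin n) : b.repr ⁅b r, b s⁆ t = -b'.repr ⁅b r, b' t⁆ s := by
    simpa only [b', Module.Basis.reindex_apply, Module.Basis.repr_reindex_apply,
      Equiv.sumComm_symm, Equiv.sumComm_apply] using
      DrinfeldDouble.repr_lie_eq_neg_repr_lie_swap hxx hXX hxX r s t
  have hcentral : Commute
      (∑ s, UniversalEnvelopingAlgebra.ι ℝ (b s) * UniversalEnvelopingAlgebra.ι ℝ (b' s)) u :=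
    UniversalEnvelopingAlgebra.commute_of_forall_commute_ι
      ((UniversalEnvelopingAlgebra.ι ℝ).commute_sum_mul_of_repr_lie_basis_eq_neg b b' hdual) u
  simpa [b', Fintype.sum_sum_type, Finset.sum_add_distrib] using hcentral.eq

/-- The quadratic element `C = Σ_i (x^i X_i + X_i x^i)` of the universal enveloping
algebra of the Drinfel'd double `D(g)` is a Casimir operator, i.e. it is central.

Here `D(g)` is formalized as any real Lie algebra `L` with a basis indexed by
`Fin n ⊕ Fin n` (`Sum.inl i ↦ x^i`, `Sum.inr i ↦ X_i`) whose brackets are given by the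
Drinfel'd double structure constants `(f, c)` (with `f i j k = f^{ij}_k`,
`c k i j = c^k_{ij}`) satisfying the compatibility condition. -/
theorem double_casimir_central (n : ℕ) (f c : Fin n → Fin n → Fin n → ℝ)
    (hcomp : ∀ a b i j : Fin n,
      (∑ k, f a b k * c k i j) =
        ∑ k, (f a k i * c b k j + f k b i * c a k j + f a k j * c b i k +
          f k b j * c a i k))
    (L : Type) [LieRing L] [LieAlgebra ℝ L]
    (b : Module.Basis (Fin n ⊕ Fin n) ℝ L)
    (hxx : ∀ i j, ⁅b (Sum.inl i), b (Sum.inl j)⁆ = ∑ k, f i j k • b (Sum.inl k))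
    (hXX : ∀ i j, ⁅b (Sum.inr i), b (Sum.inr j)⁆ = ∑ k, c k i j • b (Sum.inr k))
    (hxX : ∀ i j, ⁅b (Sum.inl i), b (Sum.inr j)⁆ =
      (∑ k, c i j k • b (Sum.inl k)) - ∑ k, f i k j • b (Sum.inr k)) :
    ∀ u : UniversalEnvelopingAlgebra ℝ L,
      (∑ i : Fin n,
        (UniversalEnvelopingAlgebra.ι ℝ (b (Sum.inl i)) *
            UniversalEnvelopingAlgebra.ι ℝ (b (Sum.inr i)) +
          UniversalEnvelopingAlgebra.ι ℝ (b (Sum.inr i)) *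
            UniversalEnvelopingAlgebra.ι ℝ (b (Sum.inl i)))) * u =
      u * (∑ i : Fin n,
        (UniversalEnvelopingAlgebra.ι ℝ (b (Sum.inl i)) *
            UniversalEnvelopingAlgebra.ι ℝ (b (Sum.inr i)) +
          UniversalEnvelopingAlgebra.ι ℝ (b (Sum.inr i)) *
            UniversalEnvelopingAlgebra.ι ℝ (b (Sum.inl i)))) :=
  double_casimir_central_general n f c L b hxx hXX hxX
end

section
/- Let D(g) be the Drinfel'd double Lie algebra of a finite-dimensional real Lie bialgebra with structure constants (f, c) satisfying the compatibility condition, and let ι : D(g) → U(D(g)) be the canonical embedding. Define the canonical classical r-matrix r = Σ_i ι(x^i) ⊗ ι(X_i) in U(D(g)) ⊗ U(D(g)), and set r_{12} = Σ_i ι(x^i) ⊗ ι(X_i) ⊗ 1, r_{13} = Σ_i ι(x^i) ⊗ 1 ⊗ ι(X_i), r_{23} = Σ_i 1 ⊗ ι(x^i) ⊗ ι(X_i) in U(D(g)) ⊗ U(D(g)) ⊗ U(D(g)). Then r satisfies the classical Yang–Baxter equation: [r_{12}, r_{13}] + [r_{12}, r_{23}] + [r_{13}, r_{23}] = 0, where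 [·,·] denotes the commutator in the associative algebra U(D(g))^{⊗3}. -/
open scoped BigOperators TensorProduct

/-- `r₁₂ = Σ_i x^i ⊗ X_i ⊗ 1` in `U(D(g)) ⊗ U(D(g)) ⊗ U(D(g))`. -/
noncomputable def rmat12 (n : ℕ) (L : Type) [LieRing L] [LieAlgebra ℝ L]
    (b : Module.Basis (Fin n ⊕ Fin n) ℝ L) :
    TensorProduct ℝ (UniversalEnvelopingAlgebra ℝ L)
      (TensorProduct ℝ (UniversalEnvelopingAlgebra ℝ L) (UniversalEnvelopingAlgebra ℝ L)) :=
  ∑ i : Fin n, UniversalEnvelopingAlgebra.ι ℝ (b (Sum.inl i)) ⊗ₜ[ℝ]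
    (UniversalEnvelopingAlgebra.ι ℝ (b (Sum.inr i)) ⊗ₜ[ℝ] 1)

/-- `r₁₃ = Σ_i x^i ⊗ 1 ⊗ X_i` in `U(D(g)) ⊗ U(D(g)) ⊗ U(D(g))`. -/
noncomputable def rmat13 (n : ℕ) (L : Type) [LieRing L] [LieAlgebra ℝ L]
    (b : Module.Basis (Fin n ⊕ Fin n) ℝ L) :
    TensorProduct ℝ (UniversalEnvelopingAlgebra ℝ L)
      (TensorProduct ℝ (UniversalEnvelopingAlgebra ℝ L) (UniversalEnvelopingAlgebra ℝ L)) :=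
  ∑ i : Fin n, UniversalEnvelopingAlgebra.ι ℝ (b (Sum.inl i)) ⊗ₜ[ℝ]
    ((1 : UniversalEnvelopingAlgebra ℝ L) ⊗ₜ[ℝ] UniversalEnvelopingAlgebra.ι ℝ (b (Sum.inr i)))

/-- `r₂₃ = Σ_i 1 ⊗ x^i ⊗ X_i` in `U(D(g)) ⊗ U(D(g)) ⊗ U(D(g))`. -/
noncomputable def rmat23 (n : ℕ) (L : Type) [LieRing L] [LieAlgebra ℝ L]
    (b : Module.Basis (Fin n ⊕ Fin n) ℝ L) :
    TensorProduct ℝ (UniversalEnvelopingAlgebra ℝ L)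
      (TensorProduct ℝ (UniversalEnvelopingAlgebra ℝ L) (UniversalEnvelopingAlgebra ℝ L)) :=
  ∑ i : Fin n, (1 : UniversalEnvelopingAlgebra ℝ L) ⊗ₜ[ℝ]
    (UniversalEnvelopingAlgebra.ι ℝ (b (Sum.inl i)) ⊗ₜ[ℝ]
      UniversalEnvelopingAlgebra.ι ℝ (b (Sum.inr i)))

/-!
With `u i = ι (x^i)` and `v i = ι (X_i)`, the three commutators of the legs of `r` are
`Σ ⁅u i, u j⁆ ⊗ v i ⊗ v j`, `Σ u i ⊗ ⁅v i, u j⁆ ⊗ v j` and `Σ u i ⊗ u j ⊗ ⁅v i, v j⁆` in any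
associative algebra. Expanding the brackets with the structure constants of the double, the
`f`-terms cancel because `f` is antisymmetric in its upper indices (the `x^i` are linearly
independent), and the two `c`-terms agree after relabelling.
-/

open TensorProduct

attribute [local instance] LieRing.ofAssociativeRing

lemma structureConstants_antisymm {R L ι : Type*} [CommRing R] [LieRing L] [Module R L]
    [Fintype ι] {x : ι → L} (hx : LinearIndependent R x) {f : ι → ι → ι → R}
    (hxx : ∀ i j, ⁅x i, x j⁆ = ∑ k, f i j k • x k) (i j k : ι) : f j i k = -f i j k := by
  have hsum : ∑ k, (f i j k + f j i k) • x k = 0 := by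
    simp only [add_smul, Finset.sum_add_distrib, ← hxx, ← lie_skew (x j) (x i), add_neg_cancel]
  exact eq_neg_of_add_eq_zero_right (Fintype.linearIndependent_iff.mp hx _ hsum k)

section

variable (R : Type*) {A ι : Type*} [CommRing R] [Ring A] [Algebra R A] [Fintype ι]
  (u v : ι → A)

def rMatrix₁₂ : A ⊗[R] (A ⊗[R] A) := ∑ i, u i ⊗ₜ (v i ⊗ₜ 1)

def rMatrix₁₃ : A ⊗[R] (A ⊗[R] A) := ∑ i, u i ⊗ₜ (1 ⊗ₜ v i)

def rMatrix₂₃ : A ⊗[R] (A ⊗[R] A) := ∑ i, 1 ⊗ₜ (u i ⊗ₜ v i)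

lemma lie_rMatrix₁₂_rMatrix₁₃ :
    ⁅rMatrix₁₂ R u v, rMatrix₁₃ R u v⁆ = ∑ i, ∑ j, ⁅u i, u j⁆ ⊗ₜ (v i ⊗ₜ v j) := by
  simp only [Ring.lie_def, rMatrix₁₂, rMatrix₁₃, Finset.sum_mul_sum,
    Algebra.TensorProduct.tmul_mul_tmul, mul_one, one_mul, sub_tmul, Finset.sum_sub_distrib]
  exact congrArg _ Finset.sum_comm

lemma lie_rMatrix₁₂_rMatrix₂₃ :
    ⁅rMatrix₁₂ R u v, rMatrix₂₃ R u v⁆ = ∑ i, ∑ j, u i ⊗ₜ (⁅v i, u j⁆ ⊗ₜ v j) := by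
  simp only [Ring.lie_def, rMatrix₁₂, rMatrix₂₃, Finset.sum_mul_sum,
    Algebra.TensorProduct.tmul_mul_tmul, mul_one, one_mul, sub_tmul, tmul_sub,
    Finset.sum_sub_distrib]
  exact congrArg _ Finset.sum_comm

lemma lie_rMatrix₁₃_rMatrix₂₃ :
    ⁅rMatrix₁₃ R u v, rMatrix₂₃ R u v⁆ = ∑ i, ∑ j, u i ⊗ₜ (u j ⊗ₜ ⁅v i, v j⁆) := by
  simp only [Ring.lie_def, rMatrix₁₃, rMatrix₂₃, Finset.sum_mul_sum,
    Algebra.TensorProduct.tmul_mul_tmul, mul_one, one_mul, tmul_sub, Finset.sum_sub_distrib]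
  exact congrArg _ Finset.sum_comm

lemma rMatrix_cybe_of_double_brackets (f c : ι → ι → ι → R) (hf : ∀ i j k, f j i k = -f i j k)
    (huu : ∀ i j, ⁅u i, u j⁆ = ∑ k, f i j k • u k)
    (hvv : ∀ i j, ⁅v i, v j⁆ = ∑ k, c k i j • v k)
    (huv : ∀ i j, ⁅u i, v j⁆ = ∑ k, c i j k • u k - ∑ k, f i k j • v k) :
    ⁅rMatrix₁₂ R u v, rMatrix₁₃ R u v⁆ + ⁅rMatrix₁₂ R u v, rMatrix₂₃ R u v⁆ +
      ⁅rMatrix₁₃ R u v, rMatrix₂₃ R u v⁆ = 0 := by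
  have hvu : ∀ i j, ⁅v i, u j⁆ = ∑ k, f j k i • v k - ∑ k, c j i k • u k := fun i j => by
    rw [← lie_skew, huv, neg_sub]
  rw [lie_rMatrix₁₂_rMatrix₁₃, lie_rMatrix₁₂_rMatrix₂₃, lie_rMatrix₁₃_rMatrix₂₃]
  simp only [huu, hvv, hvu, sum_tmul, tmul_sum, sub_tmul, tmul_sub, ← smul_tmul', tmul_smul,
    Finset.sum_sub_distrib]
  have hff : ∑ i, ∑ j, ∑ k, f j k i • u i ⊗ₜ[R] (v k ⊗ₜ[R] v j) =
      -∑ i, ∑ j, ∑ k, f i j k • u k ⊗ₜ[R] (v i ⊗ₜ[R] v j) := by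
    rw [Finset.sum_comm_cycle]
    simp only [← Finset.sum_neg_distrib]
    refine Finset.sum_congr rfl fun i _ => ?_
    rw [Finset.sum_comm]
    refine Finset.sum_congr rfl fun j _ => Finset.sum_congr rfl fun k _ => ?_
    rw [hf, neg_smul]
  have hcc : ∑ i, ∑ j, ∑ k, c j i k • u i ⊗ₜ[R] (u k ⊗ₜ[R] v j) =
      ∑ i, ∑ j, ∑ k, c k i j • u i ⊗ₜ[R] (u j ⊗ₜ[R] v k) :=
    Finset.sum_congr rfl fun _ _ => Finset.sum_comm
  rw [hff, hcc]
  abel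

end

theorem double_rmatrix_CYBE_general (n : ℕ) (f c : Fin n → Fin n → Fin n → ℝ)
    (L : Type) [LieRing L] [LieAlgebra ℝ L]
    (b : Module.Basis (Fin n ⊕ Fin n) ℝ L)
    (hxx : ∀ i j, ⁅b (Sum.inl i), b (Sum.inl j)⁆ = ∑ k, f i j k • b (Sum.inl k))
    (hXX : ∀ i j, ⁅b (Sum.inr i), b (Sum.inr j)⁆ = ∑ k, c k i j • b (Sum.inr k))
    (hxX : ∀ i j, ⁅b (Sum.inl i), b (Sum.inr j)⁆ =
      (∑ k, c i j k • b (Sum.inl k)) - ∑ k, f i k j • b (Sum.inr k)) :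
    (rmat12 n L b * rmat13 n L b - rmat13 n L b * rmat12 n L b) +
      (rmat12 n L b * rmat23 n L b - rmat23 n L b * rmat12 n L b) +
      (rmat13 n L b * rmat23 n L b - rmat23 n L b * rmat13 n L b) = 0 := by
  have hf := structureConstants_antisymm (b.linearIndependent.comp _ Sum.inl_injective) hxx
  have cybe := rMatrix_cybe_of_double_brackets ℝ
    (fun i => UniversalEnvelopingAlgebra.ι ℝ (b (Sum.inl i)))
    (fun i => UniversalEnvelopingAlgebra.ι ℝ (b (Sum.inr i))) f c hf
    (fun i j => by simp only [← LieHom.map_lie, hxx, map_sum, map_smul])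
    (fun i j => by simp only [← LieHom.map_lie, hXX, map_sum, map_smul])
    (fun i j => by simp only [← LieHom.map_lie, hxX, map_sub, map_sum, map_smul])
  simp only [Ring.lie_def] at cybe
  exact cybe

/-- The canonical classical r-matrix `r = Σ_i x^i ⊗ X_i` of a Drinfel'd double
satisfies the classical Yang–Baxter equation
`[r₁₂, r₁₃] + [r₁₂, r₂₃] + [r₁₃, r₂₃] = 0` in `U(D(g))^{⊗3}`.

Here `D(g)` is formalized as any real Lie algebra `L` with a basis indexed by
`Fin n ⊕ Fin n` (`Sum.inl i ↦ x^i`, `Sum.inr i ↦ X_i`) whose brackets are given by the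
Drinfel'd double structure constants `(f, c)` (with `f i j k = f^{ij}_k`,
`c k i j = c^k_{ij}`) satisfying the compatibility condition. -/
theorem double_rmatrix_CYBE (n : ℕ) (f c : Fin n → Fin n → Fin n → ℝ)
    (hcomp : ∀ a b i j : Fin n,
      (∑ k, f a b k * c k i j) =
        ∑ k, (f a k i * c b k j + f k b i * c a k j + f a k j * c b i k +
          f k b j * c a i k))
    (L : Type) [LieRing L] [LieAlgebra ℝ L]
    (b : Module.Basis (Fin n ⊕ Fin n) ℝ L)
    (hxx : ∀ i j, ⁅b (Sum.inl i), b (Sum.inl j)⁆ = ∑ k, f i j k • b (Sum.inl k))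
    (hXX : ∀ i j, ⁅b (Sum.inr i), b (Sum.inr j)⁆ = ∑ k, c k i j • b (Sum.inr k))
    (hxX : ∀ i j, ⁅b (Sum.inl i), b (Sum.inr j)⁆ =
      (∑ k, c i j k • b (Sum.inl k)) - ∑ k, f i k j • b (Sum.inr k)) :
    (rmat12 n L b * rmat13 n L b - rmat13 n L b * rmat12 n L b) +
      (rmat12 n L b * rmat23 n L b - rmat23 n L b * rmat12 n L b) +
      (rmat13 n L b * rmat23 n L b - rmat23 n L b * rmat13 n L b) = 0 :=
  double_rmatrix_CYBE_general n f c L b hxx hXX hxX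
end

section
/- Let D(g) be the Drinfel'd double Lie algebra of a finite-dimensional real Lie bialgebra with structure constants (f, c) satisfying the compatibility condition, let ι : D(g) → U(D(g)) be the canonical embedding, and set r = Σ_i ι(x^i) ⊗ ι(X_i) in U(D(g)) ⊗ U(D(g)). Then the cocommutator δ_DD generated by r via δ_DD(Y) = [ι(Y) ⊗ 1 + 1 ⊗ ι(Y), r] satisfies, for every basis element: [ι(x^n) ⊗ 1 + 1 ⊗ ι(x^n), r] = Σ_{l,m} c^n_{lm} ι(x^l) ⊗ ι(x^m), and [ι(X_n) ⊗ 1 + 1 ⊗ ι(X_n), r] = − Σ_{l,m} f^{lm}_n ι(X_l) ⊗ ι(X_m), where the brackets are commutators in U(D(g)) ⊗ U(D(g)). In particular, δ_DD restricts to δ on g and to −η on g* (η being the cocommutator of the dual Lie bialgebra). -/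
open scoped BigOperators TensorProduct

/-!
The commutator with `a ⊗ 1 + 1 ⊗ a` is the derivation of `U ⊗ U` acting on each tensor
factor by `[a, -]`, so
`[ι Y ⊗ 1 + 1 ⊗ ι Y, r] = Σ_i ι[Y, x^i] ⊗ ι X_i + ι x^i ⊗ ι[Y, X_i]`.
Expanding the brackets of the double, the mixed terms `x ⊗ X` cancel in pairs, leaving
`c^n_{lm} x^l ⊗ x^m` for `Y = x^n`, and `f^{lk}_n X_k ⊗ X_l = -f^{kl}_n X_k ⊗ X_l` for
`Y = X_n` by antisymmetry of `f`.
-/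

/-- The canonical classical r-matrix `r = Σ_i x^i ⊗ X_i` of a Drinfel'd double,
regarded as an element of `U(D(g)) ⊗ U(D(g))`. -/
noncomputable def rmat (n : ℕ) (L : Type) [LieRing L] [LieAlgebra ℝ L]
    (b : Module.Basis (Fin n ⊕ Fin n) ℝ L) :
    TensorProduct ℝ (UniversalEnvelopingAlgebra ℝ L) (UniversalEnvelopingAlgebra ℝ L) :=
  ∑ i : Fin n, UniversalEnvelopingAlgebra.ι ℝ (b (Sum.inl i)) ⊗ₜ[ℝ]
    UniversalEnvelopingAlgebra.ι ℝ (b (Sum.inr i))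

section Primitive

variable {R A : Type*} [CommRing R] [Ring A] [Algebra R A]

theorem lie_primitive_tmul (a u v : A) :
    ⁅a ⊗ₜ[R] (1 : A) + (1 : A) ⊗ₜ[R] a, u ⊗ₜ[R] v⁆ = ⁅a, u⁆ ⊗ₜ[R] v + u ⊗ₜ[R] ⁅a, v⁆ := by
  simp only [Ring.lie_def, add_mul, mul_add,
    Algebra.TensorProduct.tmul_mul_tmul, one_mul, mul_one, TensorProduct.sub_tmul,
    TensorProduct.tmul_sub]
  abel

theorem lie_primitive_sum_tmul {ι : Type*} (s : Finset ι) (a : A) (u v : ι → A) :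
    ⁅a ⊗ₜ[R] (1 : A) + (1 : A) ⊗ₜ[R] a, ∑ i ∈ s, u i ⊗ₜ[R] v i⁆ =
      ∑ i ∈ s, (⁅a, u i⁆ ⊗ₜ[R] v i + u i ⊗ₜ[R] ⁅a, v i⁆) := by
  rw [Ring.lie_def, Finset.mul_sum, Finset.sum_mul, ← Finset.sum_sub_distrib]
  simp only [← Ring.lie_def, lie_primitive_tmul]

end Primitive

theorem Module.Basis.structureConstants_antisymm {R L κ μ : Type*} [CommRing R] [LieRing L]
    [LieAlgebra R L] [Fintype κ] (b : Module.Basis (κ ⊕ μ) R L) (f : κ → κ → κ → R)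
    (hf : ∀ i j, ⁅b (Sum.inl i), b (Sum.inl j)⁆ = ∑ k, f i j k • b (Sum.inl k)) (i j k : κ) :
    f j i k = -f i j k := by
  have hsum : ∑ k, (f i j k + f j i k) • b (Sum.inl k) = 0 := by
    simp only [add_smul, Finset.sum_add_distrib, ← hf, ← lie_skew (b (Sum.inl i)), neg_add_cancel]
  have := (Fintype.linearIndependent_iff.mp
    (b.linearIndependent.comp Sum.inl Sum.inl_injective)) _ hsum k
  linear_combination this

namespace DrinfeldDouble

open UniversalEnvelopingAlgebra

variable {n : ℕ} {L : Type} [LieRing L] [LieAlgebra ℝ L] (b : Module.Basis (Fin n ⊕ Fin n) ℝ L)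

theorem lie_primitive_rmat (a : L) :
    ⁅ι ℝ a ⊗ₜ[ℝ] (1 : UniversalEnvelopingAlgebra ℝ L) + 1 ⊗ₜ[ℝ] ι ℝ a, rmat n L b⁆ =
      ∑ i, (ι ℝ ⁅a, b (Sum.inl i)⁆ ⊗ₜ[ℝ] ι ℝ (b (Sum.inr i)) +
        ι ℝ (b (Sum.inl i)) ⊗ₜ[ℝ] ι ℝ ⁅a, b (Sum.inr i)⁆) := by
  simp only [rmat, lie_primitive_sum_tmul, LieHom.map_lie]

variable {b} {f c : Fin n → Fin n → Fin n → ℝ}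

theorem lie_primitive_rmat_inl
    (hxx : ∀ i j, ⁅b (Sum.inl i), b (Sum.inl j)⁆ = ∑ k, f i j k • b (Sum.inl k))
    (hxX : ∀ i j, ⁅b (Sum.inl i), b (Sum.inr j)⁆ =
      (∑ k, c i j k • b (Sum.inl k)) - ∑ k, f i k j • b (Sum.inr k)) (m : Fin n) :
    ⁅ι ℝ (b (Sum.inl m)) ⊗ₜ[ℝ] (1 : UniversalEnvelopingAlgebra ℝ L) + 1 ⊗ₜ[ℝ] ι ℝ (b (Sum.inl m)),
        rmat n L b⁆ =
      ∑ i, ∑ j, c m i j • (ι ℝ (b (Sum.inl i)) ⊗ₜ[ℝ] ι ℝ (b (Sum.inl j))) := by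
  simp only [lie_primitive_rmat, hxx, hxX, map_sub, map_sum, map_smul, TensorProduct.sum_tmul,
    TensorProduct.tmul_sum, TensorProduct.smul_tmul', TensorProduct.tmul_smul,
    TensorProduct.tmul_sub, Finset.sum_add_distrib, Finset.sum_sub_distrib]
  rw [Finset.sum_comm]
  abel

theorem lie_primitive_rmat_inr
    (hxx : ∀ i j, ⁅b (Sum.inl i), b (Sum.inl j)⁆ = ∑ k, f i j k • b (Sum.inl k))
    (hXX : ∀ i j, ⁅b (Sum.inr i), b (Sum.inr j)⁆ = ∑ k, c k i j • b (Sum.inr k))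
    (hxX : ∀ i j, ⁅b (Sum.inl i), b (Sum.inr j)⁆ =
      (∑ k, c i j k • b (Sum.inl k)) - ∑ k, f i k j • b (Sum.inr k)) (m : Fin n) :
    ⁅ι ℝ (b (Sum.inr m)) ⊗ₜ[ℝ] (1 : UniversalEnvelopingAlgebra ℝ L) + 1 ⊗ₜ[ℝ] ι ℝ (b (Sum.inr m)),
        rmat n L b⁆ =
      -∑ i, ∑ j, f i j m • (ι ℝ (b (Sum.inr i)) ⊗ₜ[ℝ] ι ℝ (b (Sum.inr j))) := by
  have hXx : ∀ i j, ⁅b (Sum.inr j), b (Sum.inl i)⁆ =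
      (∑ k, f i k j • b (Sum.inr k)) - ∑ k, c i j k • b (Sum.inl k) := fun i j => by
    rw [← lie_skew, hxX, neg_sub]
  have hf := b.structureConstants_antisymm f hxx
  have hrhs : -∑ i, ∑ j, f i j m • (ι ℝ (b (Sum.inr i)) ⊗ₜ[ℝ] ι ℝ (b (Sum.inr j))) =
      ∑ i, ∑ k, f i k m • (ι ℝ (b (Sum.inr k)) ⊗ₜ[ℝ] ι ℝ (b (Sum.inr i))) := by
    rw [Finset.sum_comm]
    simp only [← Finset.sum_neg_distrib, ← neg_smul, ← hf]
  rw [hrhs]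
  simp only [lie_primitive_rmat, hXx, hXX, map_sub, map_sum, map_smul, TensorProduct.sum_tmul,
    TensorProduct.tmul_sum, TensorProduct.smul_tmul', TensorProduct.tmul_smul,
    TensorProduct.sub_tmul, Finset.sum_add_distrib, Finset.sum_sub_distrib]
  rw [Finset.sum_comm (f := fun i k => (c i m k • ι ℝ (b (Sum.inl k))) ⊗ₜ[ℝ] ι ℝ (b (Sum.inr i)))]
  abel

end DrinfeldDouble

theorem double_cocommutator_from_rmatrix_general (n : ℕ) (f c : Fin n → Fin n → Fin n → ℝ)
    (L : Type) [LieRing L] [LieAlgebra ℝ L]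
    (b : Module.Basis (Fin n ⊕ Fin n) ℝ L)
    (hxx : ∀ i j, ⁅b (Sum.inl i), b (Sum.inl j)⁆ = ∑ k, f i j k • b (Sum.inl k))
    (hXX : ∀ i j, ⁅b (Sum.inr i), b (Sum.inr j)⁆ = ∑ k, c k i j • b (Sum.inr k))
    (hxX : ∀ i j, ⁅b (Sum.inl i), b (Sum.inr j)⁆ =
      (∑ k, c i j k • b (Sum.inl k)) - ∑ k, f i k j • b (Sum.inr k)) :
    (∀ m : Fin n,
      (UniversalEnvelopingAlgebra.ι ℝ (b (Sum.inl m)) ⊗ₜ[ℝ]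
              (1 : UniversalEnvelopingAlgebra ℝ L) +
            (1 : UniversalEnvelopingAlgebra ℝ L) ⊗ₜ[ℝ]
              UniversalEnvelopingAlgebra.ι ℝ (b (Sum.inl m))) * rmat n L b -
          rmat n L b *
            (UniversalEnvelopingAlgebra.ι ℝ (b (Sum.inl m)) ⊗ₜ[ℝ]
                (1 : UniversalEnvelopingAlgebra ℝ L) +
              (1 : UniversalEnvelopingAlgebra ℝ L) ⊗ₜ[ℝ]
                UniversalEnvelopingAlgebra.ι ℝ (b (Sum.inl m))) =
        ∑ i : Fin n, ∑ j : Fin n,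
          c m i j • (UniversalEnvelopingAlgebra.ι ℝ (b (Sum.inl i)) ⊗ₜ[ℝ]
            UniversalEnvelopingAlgebra.ι ℝ (b (Sum.inl j)))) ∧
    (∀ m : Fin n,
      (UniversalEnvelopingAlgebra.ι ℝ (b (Sum.inr m)) ⊗ₜ[ℝ]
              (1 : UniversalEnvelopingAlgebra ℝ L) +
            (1 : UniversalEnvelopingAlgebra ℝ L) ⊗ₜ[ℝ]
              UniversalEnvelopingAlgebra.ι ℝ (b (Sum.inr m))) * rmat n L b -
          rmat n L b *
            (UniversalEnvelopingAlgebra.ι ℝ (b (Sum.inr m)) ⊗ₜ[ℝ]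
                (1 : UniversalEnvelopingAlgebra ℝ L) +
              (1 : UniversalEnvelopingAlgebra ℝ L) ⊗ₜ[ℝ]
                UniversalEnvelopingAlgebra.ι ℝ (b (Sum.inr m))) =
        - ∑ i : Fin n, ∑ j : Fin n,
          f i j m • (UniversalEnvelopingAlgebra.ι ℝ (b (Sum.inr i)) ⊗ₜ[ℝ]
            UniversalEnvelopingAlgebra.ι ℝ (b (Sum.inr j)))) :=
  ⟨DrinfeldDouble.lie_primitive_rmat_inl hxx hxX, DrinfeldDouble.lie_primitive_rmat_inr hxx hXX hxX⟩

/-- The cocommutator `δ_DD(Y) = [Y ⊗ 1 + 1 ⊗ Y, r]` generated by the canonical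
r-matrix of a Drinfel'd double restricts to `δ` on `g` and to `−η` on `g*`:
`δ_DD(x^n) = c^n_{lm} x^l ⊗ x^m` and `δ_DD(X_n) = −f^{lm}_n X_l ⊗ X_m`.

Here `D(g)` is formalized as any real Lie algebra `L` with a basis indexed by
`Fin n ⊕ Fin n` (`Sum.inl i ↦ x^i`, `Sum.inr i ↦ X_i`) whose brackets are given by the
Drinfel'd double structure constants `(f, c)` (with `f i j k = f^{ij}_k`,
`c k i j = c^k_{ij}`) satisfying the compatibility condition. -/
theorem double_cocommutator_from_rmatrix (n : ℕ) (f c : Fin n → Fin n → Fin n → ℝ)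
    (hcomp : ∀ a b i j : Fin n,
      (∑ k, f a b k * c k i j) =
        ∑ k, (f a k i * c b k j + f k b i * c a k j + f a k j * c b i k +
          f k b j * c a i k))
    (L : Type) [LieRing L] [LieAlgebra ℝ L]
    (b : Module.Basis (Fin n ⊕ Fin n) ℝ L)
    (hxx : ∀ i j, ⁅b (Sum.inl i), b (Sum.inl j)⁆ = ∑ k, f i j k • b (Sum.inl k))
    (hXX : ∀ i j, ⁅b (Sum.inr i), b (Sum.inr j)⁆ = ∑ k, c k i j • b (Sum.inr k))
    (hxX : ∀ i j, ⁅b (Sum.inl i), b (Sum.inr j)⁆ =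
      (∑ k, c i j k • b (Sum.inl k)) - ∑ k, f i k j • b (Sum.inr k)) :
    (∀ m : Fin n,
      (UniversalEnvelopingAlgebra.ι ℝ (b (Sum.inl m)) ⊗ₜ[ℝ]
              (1 : UniversalEnvelopingAlgebra ℝ L) +
            (1 : UniversalEnvelopingAlgebra ℝ L) ⊗ₜ[ℝ]
              UniversalEnvelopingAlgebra.ι ℝ (b (Sum.inl m))) * rmat n L b -
          rmat n L b *
            (UniversalEnvelopingAlgebra.ι ℝ (b (Sum.inl m)) ⊗ₜ[ℝ]
                (1 : UniversalEnvelopingAlgebra ℝ L) +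
              (1 : UniversalEnvelopingAlgebra ℝ L) ⊗ₜ[ℝ]
                UniversalEnvelopingAlgebra.ι ℝ (b (Sum.inl m))) =
        ∑ i : Fin n, ∑ j : Fin n,
          c m i j • (UniversalEnvelopingAlgebra.ι ℝ (b (Sum.inl i)) ⊗ₜ[ℝ]
            UniversalEnvelopingAlgebra.ι ℝ (b (Sum.inl j)))) ∧
    (∀ m : Fin n,
      (UniversalEnvelopingAlgebra.ι ℝ (b (Sum.inr m)) ⊗ₜ[ℝ]
              (1 : UniversalEnvelopingAlgebra ℝ L) +
            (1 : UniversalEnvelopingAlgebra ℝ L) ⊗ₜ[ℝ]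
              UniversalEnvelopingAlgebra.ι ℝ (b (Sum.inr m))) * rmat n L b -
          rmat n L b *
            (UniversalEnvelopingAlgebra.ι ℝ (b (Sum.inr m)) ⊗ₜ[ℝ]
                (1 : UniversalEnvelopingAlgebra ℝ L) +
              (1 : UniversalEnvelopingAlgebra ℝ L) ⊗ₜ[ℝ]
                UniversalEnvelopingAlgebra.ι ℝ (b (Sum.inr m))) =
        - ∑ i : Fin n, ∑ j : Fin n,
          f i j m • (UniversalEnvelopingAlgebra.ι ℝ (b (Sum.inr i)) ⊗ₜ[ℝ]
            UniversalEnvelopingAlgebra.ι ℝ (b (Sum.inr j)))) :=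
  double_cocommutator_from_rmatrix_general n f c L b hxx hXX hxX
end

section
/- Let λ be a nonzero real number. The 4-dimensional real Lie algebra with basis {x^0, x^1, X_0, X_1} and brackets [x^0,x^1] = x^1, [X_0,X_1] = λ X_1, [x^0,X_0] = 0, [x^0,X_1] = −X_1, [x^1,X_0] = λ x^1, [x^1,X_1] = −λ x^0 + X_0 is isomorphic, as a real Lie algebra, to gl(2, R), the Lie algebra of all 2×2 real matrices with the commutator bracket. -/
/-- The standard basis of `ℝ⁴`; the coordinates correspond to the ordered basis
`{x^0, x^1, X_0, X_1}` of the "non-standard" two-dimensional Drinfel'd double. -/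
def e4 (i : Fin 4) : Fin 4 → ℝ := Pi.single i 1

/-- The explicit linear equivalence `ℝ⁴ ≃ gl(2,ℝ)` realizing the isomorphism. -/
noncomputable def glEquiv (lam : ℝ) (hlam : lam ≠ 0) :
    (Fin 4 → ℝ) ≃ₗ[ℝ] Matrix (Fin 2) (Fin 2) ℝ :=
  LinearEquiv.ofLinear
    { toFun := fun u => !![lam * u 2, u 3; -(lam * u 1), u 0],
      map_add' := by
        intro u v; ext i j; fin_cases i <;> fin_cases j <;> simp <;> ring
      map_smul' := by
        intro c u; ext i j; fin_cases i <;> fin_cases j <;> simp <;> ring }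
    { toFun := fun m => ![m 1 1, -(m 1 0) / lam, m 0 0 / lam, m 0 1],
      map_add' := by
        intro m n; funext i; fin_cases i <;> simp <;> ring
      map_smul' := by
        intro c m; funext i; fin_cases i <;> simp <;> ring }
    (by
      ext m i j
      fin_cases i <;> fin_cases j <;> simp <;> field_simp)
    (by
      ext u i
      fin_cases i <;> simp <;> field_simp)

lemma glEquiv_apply (lam : ℝ) (hlam : lam ≠ 0) (u : Fin 4 → ℝ) :
    glEquiv lam hlam u = !![lam * u 2, u 3; -(lam * u 1), u 0] := rfl

lemma glEquiv_key (lam : ℝ) (hlam : lam ≠ 0) (u v : Fin 4 → ℝ) :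
    glEquiv lam hlam
      (![ -lam * (u 1 * v 3 - u 3 * v 1),
         (u 0 * v 1 - u 1 * v 0) + lam * (u 1 * v 2 - u 2 * v 1),
         u 1 * v 3 - u 3 * v 1,
         -(u 0 * v 3 - u 3 * v 0) + lam * (u 2 * v 3 - u 3 * v 2)])
    = glEquiv lam hlam u * glEquiv lam hlam v
      - glEquiv lam hlam v * glEquiv lam hlam u := by
  simp only [glEquiv_apply]
  ext i j
  fin_cases i <;> fin_cases j <;>
    simp [Matrix.mul_apply, Fin.sum_univ_two] <;> ring

/-- For `λ ≠ 0`, the "non-standard" two-dimensional Drinfel'd double, i.e. the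
4-dimensional real Lie algebra with basis `{x^0, x^1, X_0, X_1}` and brackets
`[x^0,x^1] = x^1`, `[X_0,X_1] = λ X_1`, `[x^0,X_0] = 0`, `[x^0,X_1] = −X_1`,
`[x^1,X_0] = λ x^1`, `[x^1,X_1] = −λ x^0 + X_0`, is isomorphic as a real Lie algebra
to `gl(2,ℝ)`, the Lie algebra of all 2×2 real matrices with the commutator bracket. -/
theorem nonstandard_2d_double_iso_gl2 (lam : ℝ) (hlam : lam ≠ 0)
    (br : (Fin 4 → ℝ) →ₗ[ℝ] (Fin 4 → ℝ) →ₗ[ℝ] (Fin 4 → ℝ))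
    (hanti : ∀ u v, br u v = - br v u)
    (hjac : ∀ u v w, br u (br v w) + br v (br w u) + br w (br u v) = 0)
    (h01 : br (e4 0) (e4 1) = e4 1)             -- [x^0, x^1] = x^1
    (h02 : br (e4 0) (e4 2) = 0)                -- [x^0, X_0] = 0
    (h03 : br (e4 0) (e4 3) = -(e4 3))          -- [x^0, X_1] = −X_1
    (h12 : br (e4 1) (e4 2) = lam • e4 1)       -- [x^1, X_0] = λ x^1
    (h13 : br (e4 1) (e4 3) = (-lam) • e4 0 + e4 2)  -- [x^1, X_1] = −λ x^0 + X_0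
    (h23 : br (e4 2) (e4 3) = lam • e4 3) :     -- [X_0, X_1] = λ X_1
    ∃ eqv : (Fin 4 → ℝ) ≃ₗ[ℝ] Matrix (Fin 2) (Fin 2) ℝ,
      ∀ u v, eqv (br u v) = eqv u * eqv v - eqv v * eqv u := by
  have hdiag : ∀ u, br u u = 0 := by
    intro u
    have h := hanti u u
    have h2 : br u u + br u u = 0 := by nth_rewrite 2 [h]; simp
    have h3 : (2:ℝ) • br u u = 0 := by rw [two_smul]; exact h2
    simpa [two_ne_zero] using (smul_eq_zero.mp h3)
  have hu : ∀ u : Fin 4 → ℝ, u = u 0 • e4 0 + u 1 • e4 1 + u 2 • e4 2 + u 3 • e4 3 := by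
    intro u
    funext i
    fin_cases i <;> simp [e4, Pi.single_apply]
  have expand : ∀ u v : Fin 4 → ℝ, br u v =
      ![ -lam * (u 1 * v 3 - u 3 * v 1),
         (u 0 * v 1 - u 1 * v 0) + lam * (u 1 * v 2 - u 2 * v 1),
         u 1 * v 3 - u 3 * v 1,
         -(u 0 * v 3 - u 3 * v 0) + lam * (u 2 * v 3 - u 3 * v 2)] := by
    intro u v
    have h10 : br (e4 1) (e4 0) = -(e4 1) := by rw [hanti, h01]
    have h20 : br (e4 2) (e4 0) = 0 := by rw [hanti, h02]; simp
    have h30 : br (e4 3) (e4 0) = e4 3 := by rw [hanti, h03]; simp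
    have h21 : br (e4 2) (e4 1) = -(lam • e4 1) := by rw [hanti, h12]
    have h31 : br (e4 3) (e4 1) = -((-lam) • e4 0 + e4 2) := by rw [hanti, h13]
    have h32 : br (e4 3) (e4 2) = -(lam • e4 3) := by rw [hanti, h23]
    nth_rewrite 1 [hu u, hu v]
    simp only [map_add, map_smul, LinearMap.add_apply, LinearMap.smul_apply,
      h01, h02, h03, h12, h13, h23, h10, h20, h30, h21, h31, h32,
      hdiag (e4 0), hdiag (e4 1), hdiag (e4 2), hdiag (e4 3)]
    funext i
    fin_cases i <;>
      simp [e4, Pi.single_apply, Matrix.cons_val_zero, Matrix.cons_val_one] <;> ring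
  refine ⟨glEquiv lam hlam, ?_⟩
  intro u v
  rw [expand u v]
  exact glEquiv_key lam hlam u v
end

section
/- The 4-dimensional real Lie algebra obtained from the 'non-standard' two-dimensional Drinfel'd double by setting λ = 0, i.e. with basis {x^0, x^1, X_0, X_1} and nonzero brackets [x^0,x^1] = x^1, [x^0,X_1] = −X_1, [x^1,X_1] = X_0, is isomorphic as a real Lie algebra to the 'standard' two-dimensional Drinfel'd double, i.e. the Lie algebra with basis {y^0, y^1, Y_0, Y_1} and brackets [y^0,y^1] = y^1, [Y_0,Y_1] = Y_0, [y^0,Y_0] = y^1, [y^0,Y_1] = −y^0 − Y_1, [y^1,Y_0] = 0, [y^1,Y_1] = Y_0. -/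
lemma basisfun_eq (i : Fin 4) : (Pi.basisFun ℝ (Fin 4)) i = e4 i := by
  simp [e4, Pi.basisFun_apply]

def fwd : (Fin 4 → ℝ) →ₗ[ℝ] (Fin 4 → ℝ) where
  toFun u := ![u 0 + u 3, u 1 - u 2, u 2, u 3]
  map_add' u v := by funext i; fin_cases i <;> simp <;> ring
  map_smul' c u := by funext i; fin_cases i <;> simp <;> ring

def bwd : (Fin 4 → ℝ) →ₗ[ℝ] (Fin 4 → ℝ) where
  toFun u := ![u 0 - u 3, u 1 + u 2, u 2, u 3]
  map_add' u v := by funext i; fin_cases i <;> simp <;> ring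
  map_smul' c u := by funext i; fin_cases i <;> simp <;> ring

noncomputable def myeqv : (Fin 4 → ℝ) ≃ₗ[ℝ] (Fin 4 → ℝ) :=
  LinearEquiv.ofLinear fwd bwd
    (by apply LinearMap.ext; intro u; funext i; fin_cases i <;> simp [fwd, bwd])
    (by apply LinearMap.ext; intro u; funext i; fin_cases i <;> simp [fwd, bwd])

lemma myeqv_apply (u : Fin 4 → ℝ) : myeqv u = ![u 0 + u 3, u 1 - u 2, u 2, u 3] := rfl

lemma myeqv_e0 : myeqv (e4 0) = e4 0 := by
  rw [myeqv_apply]; funext i; fin_cases i <;> simp [e4, Pi.single_apply]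
lemma myeqv_e1 : myeqv (e4 1) = e4 1 := by
  rw [myeqv_apply]; funext i; fin_cases i <;> simp [e4, Pi.single_apply]
lemma myeqv_e2 : myeqv (e4 2) = e4 2 - e4 1 := by
  rw [myeqv_apply]; funext i; fin_cases i <;> simp [e4, Pi.single_apply]
lemma myeqv_e3 : myeqv (e4 3) = e4 0 + e4 3 := by
  rw [myeqv_apply]; funext i; fin_cases i <;> simp [e4, Pi.single_apply]

/-- The `λ = 0` case of the "non-standard" two-dimensional Drinfel'd double
(basis `{x^0, x^1, X_0, X_1}`, nonzero brackets `[x^0,x^1] = x^1`,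
`[x^0,X_1] = −X_1`, `[x^1,X_1] = X_0`) is isomorphic as a real Lie algebra to the
"standard" two-dimensional Drinfel'd double (basis `{y^0, y^1, Y_0, Y_1}`, brackets
`[y^0,y^1] = y^1`, `[Y_0,Y_1] = Y_0`, `[y^0,Y_0] = y^1`, `[y^0,Y_1] = −y^0 − Y_1`,
`[y^1,Y_0] = 0`, `[y^1,Y_1] = Y_0`). -/
theorem nonstandard_lam_zero_iso_standard
    (brA : (Fin 4 → ℝ) →ₗ[ℝ] (Fin 4 → ℝ) →ₗ[ℝ] (Fin 4 → ℝ))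
    (hAanti : ∀ u v, brA u v = - brA v u)
    (hAjac : ∀ u v w, brA u (brA v w) + brA v (brA w u) + brA w (brA u v) = 0)
    (hA01 : brA (e4 0) (e4 1) = e4 1)        -- [x^0, x^1] = x^1
    (hA02 : brA (e4 0) (e4 2) = 0)           -- [x^0, X_0] = 0
    (hA03 : brA (e4 0) (e4 3) = -(e4 3))     -- [x^0, X_1] = −X_1
    (hA12 : brA (e4 1) (e4 2) = 0)           -- [x^1, X_0] = 0
    (hA13 : brA (e4 1) (e4 3) = e4 2)        -- [x^1, X_1] = X_0
    (hA23 : brA (e4 2) (e4 3) = 0)           -- [X_0, X_1] = 0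
    (brB : (Fin 4 → ℝ) →ₗ[ℝ] (Fin 4 → ℝ) →ₗ[ℝ] (Fin 4 → ℝ))
    (hBanti : ∀ u v, brB u v = - brB v u)
    (hBjac : ∀ u v w, brB u (brB v w) + brB v (brB w u) + brB w (brB u v) = 0)
    (hB01 : brB (e4 0) (e4 1) = e4 1)        -- [y^0, y^1] = y^1
    (hB02 : brB (e4 0) (e4 2) = e4 1)        -- [y^0, Y_0] = y^1
    (hB03 : brB (e4 0) (e4 3) = -(e4 0) - e4 3)  -- [y^0, Y_1] = −y^0 − Y_1
    (hB12 : brB (e4 1) (e4 2) = 0)           -- [y^1, Y_0] = 0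
    (hB13 : brB (e4 1) (e4 3) = e4 2)        -- [y^1, Y_1] = Y_0
    (hB23 : brB (e4 2) (e4 3) = e4 2) :      -- [Y_0, Y_1] = Y_0
    ∃ eqv : (Fin 4 → ℝ) ≃ₗ[ℝ] (Fin 4 → ℝ),
      ∀ u v, eqv (brA u v) = brB (eqv u) (eqv v) := by
  have hAdiag : ∀ u, brA u u = 0 := fun u => by have h := hAanti u u; rw [eq_neg_iff_add_eq_zero, ← two_smul ℝ] at h; simpa using (smul_eq_zero.mp h).resolve_left (by norm_num)
  have hBdiag : ∀ u, brB u u = 0 := fun u => by have h := hBanti u u; rw [eq_neg_iff_add_eq_zero, ← two_smul ℝ] at h; simpa using (smul_eq_zero.mp h).resolve_left (by norm_num)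
  have hA10 : brA (e4 1) (e4 0) = -(e4 1) := by rw [hAanti, hA01]
  have hA20 : brA (e4 2) (e4 0) = 0 := by rw [hAanti, hA02, neg_zero]
  have hA30 : brA (e4 3) (e4 0) = e4 3 := by rw [hAanti, hA03, neg_neg]
  have hA21 : brA (e4 2) (e4 1) = 0 := by rw [hAanti, hA12, neg_zero]
  have hA31 : brA (e4 3) (e4 1) = -(e4 2) := by rw [hAanti, hA13]
  have hA32 : brA (e4 3) (e4 2) = 0 := by rw [hAanti, hA23, neg_zero]
  have hB10 : brB (e4 1) (e4 0) = -(e4 1) := by rw [hBanti, hB01]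
  have hB20 : brB (e4 2) (e4 0) = -(e4 1) := by rw [hBanti, hB02]
  have hB30 : brB (e4 3) (e4 0) = e4 0 + e4 3 := by
    rw [hBanti, hB03]; abel
  have hB21 : brB (e4 2) (e4 1) = 0 := by rw [hBanti, hB12, neg_zero]
  have hB31 : brB (e4 3) (e4 1) = -(e4 2) := by rw [hBanti, hB13]
  have hB32 : brB (e4 3) (e4 2) = -(e4 2) := by rw [hBanti, hB23]
  refine ⟨myeqv, ?_⟩
  have main : brA.compr₂ myeqv.toLinearMap
      = brB.compl₁₂ myeqv.toLinearMap myeqv.toLinearMap := by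
    apply LinearMap.ext_basis (Pi.basisFun ℝ (Fin 4)) (Pi.basisFun ℝ (Fin 4))
    intro i j
    simp only [LinearMap.compr₂_apply, LinearMap.compl₁₂_apply, basisfun_eq,
      LinearEquiv.coe_coe]
    have m0 : (⟨0, by omega⟩ : Fin 4) = 0 := rfl
    have m1 : (⟨1, by omega⟩ : Fin 4) = 1 := rfl
    have m2 : (⟨2, by omega⟩ : Fin 4) = 2 := rfl
    have m3 : (⟨3, by omega⟩ : Fin 4) = 3 := rfl
    fin_cases i <;> fin_cases j <;>
      simp only [m0, m1, m2, m3, Fin.isValue, hAdiag, hBdiag, hA01, hA02, hA03, hA12, hA13, hA23,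
        hA10, hA20, hA30, hA21, hA31, hA32, map_zero, map_neg, map_add, map_sub,
        myeqv_e0, myeqv_e1, myeqv_e2, myeqv_e3,
        LinearMap.map_sub, LinearMap.map_add, LinearMap.map_neg,
        LinearMap.sub_apply, LinearMap.add_apply, LinearMap.neg_apply,
        hB01, hB02, hB03, hB12, hB13, hB23, hB10, hB20, hB30, hB21, hB31, hB32, neg_neg, neg_zero, map_zero] <;>
      first | rfl | abel
  intro u v
  have := LinearMap.congr_fun (LinearMap.congr_fun main u) v
  simpa [LinearMap.compr₂_apply, LinearMap.compl₁₂_apply] using this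
end

section
/- Let λ be a nonzero real number. The 6-dimensional real Lie algebra with basis {x^0, x^1, x^2, X_0, X_1, X_2} and nonzero brackets [x^0,x^1] = x^1, [x^0,x^2] = x^2, [X_0,X_1] = λ X_1, [X_0,X_2] = −λ X_2, [X_1,X_2] = X_0, [x^0,X_1] = x^2 − X_1, [x^0,X_2] = −x^1 − X_2, [x^1,X_0] = λ x^1, [x^1,X_1] = −λ x^0 + X_0, [x^2,X_0] = −λ x^2, [x^2,X_2] = λ x^0 + X_0 (all other brackets of basis elements vanish) is isomorphic, as a real Lie algebra, to the direct sum sl(2,R) ⊕ sl(2,R), where sl(2,R) is the Lie algebra of traceless 2×2 real matrices. -/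
/-- The standard basis of `ℝ⁶`; the coordinates correspond to the ordered basis
`{x^0, x^1, x^2, X_0, X_1, X_2}` of the Drinfel'd double. -/
def e6 (i : Fin 6) : Fin 6 → ℝ := Pi.single i 1

/-- The explicit isomorphism onto `sl₂ ⊕ sl₂`. -/
noncomputable def ddPhi (lam : ℝ) :
    (Fin 6 → ℝ) →ₗ[ℝ] (Matrix (Fin 2) (Fin 2) ℝ × Matrix (Fin 2) (Fin 2) ℝ) where
  toFun u :=
    (!![u 0 / 2 - lam * u 3 / 2, u 1 - u 5 / 2; -(lam * u 4), -(u 0 / 2 - lam * u 3 / 2)],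
     !![u 0 / 2 + lam * u 3 / 2, u 2 + u 4 / 2; lam * u 5, -(u 0 / 2 + lam * u 3 / 2)])
  map_add' u v := by
    refine Prod.ext ?_ ?_ <;> ext a b <;> fin_cases a <;> fin_cases b <;>
      simp [Matrix.add_apply] <;> ring
  map_smul' c u := by
    refine Prod.ext ?_ ?_ <;> ext a b <;> fin_cases a <;> fin_cases b <;>
      simp [Matrix.smul_apply] <;> ring

/-- The inverse map on traceless pairs. -/
noncomputable def ddPsi (lam : ℝ)
    (p : Matrix (Fin 2) (Fin 2) ℝ × Matrix (Fin 2) (Fin 2) ℝ) : Fin 6 → ℝ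
  | 0 => p.1 0 0 + p.2 0 0
  | 1 => p.1 0 1 + p.2 1 0 / (2 * lam)
  | 2 => p.2 0 1 + p.1 1 0 / (2 * lam)
  | 3 => (p.2 0 0 - p.1 0 0) / lam
  | 4 => -(p.1 1 0) / lam
  | 5 => p.2 1 0 / lam

/-- The commutator, as a bilinear map, pulled back along `φ`. -/
noncomputable def commMap
    (φ : (Fin 6 → ℝ) →ₗ[ℝ] (Matrix (Fin 2) (Fin 2) ℝ × Matrix (Fin 2) (Fin 2) ℝ)) :
    (Fin 6 → ℝ) →ₗ[ℝ] (Fin 6 → ℝ) →ₗ[ℝ]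
      (Matrix (Fin 2) (Fin 2) ℝ × Matrix (Fin 2) (Fin 2) ℝ) :=
  LinearMap.mk₂ ℝ (fun u v => φ u * φ v - φ v * φ u)
    (fun m n p => by simp only [map_add, add_mul, mul_add]; abel)
    (fun c m p => by simp only [map_smul, smul_mul_assoc, mul_smul_comm, smul_sub])
    (fun m n p => by simp only [map_add, add_mul, mul_add]; abel)
    (fun c m p => by simp only [map_smul, smul_mul_assoc, mul_smul_comm, smul_sub])

lemma commMap_apply (φ : (Fin 6 → ℝ) →ₗ[ℝ] (Matrix (Fin 2) (Fin 2) ℝ × Matrix (Fin 2) (Fin 2) ℝ))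
    (u v : Fin 6 → ℝ) : commMap φ u v = φ u * φ v - φ v * φ u := rfl

set_option maxHeartbeats 8000000

/-- The Drinfel'd double of type `(r_3(1), sl_2)` (Table II, first column) with
parameter `λ ≠ 0` is isomorphic, as a real Lie algebra, to `sl(2,ℝ) ⊕ sl(2,ℝ)`:
there is an injective linear map into the product of two copies of the 2×2 real
matrices whose range consists exactly of the pairs of traceless matrices and which
sends the double bracket to the (componentwise) commutator. -/
theorem dd_r31_sl2_iso_sl2_sum_sl2 (lam : ℝ) (hlam : lam ≠ 0)
    (br : (Fin 6 → ℝ) →ₗ[ℝ] (Fin 6 → ℝ) →ₗ[ℝ] (Fin 6 → ℝ))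
    (hanti : ∀ u v, br u v = - br v u)
    (hjac : ∀ u v w, br u (br v w) + br v (br w u) + br w (br u v) = 0)
    (h01 : br (e6 0) (e6 1) = e6 1)                  -- [x^0, x^1] = x^1
    (h02 : br (e6 0) (e6 2) = e6 2)                  -- [x^0, x^2] = x^2
    (h03 : br (e6 0) (e6 3) = 0)                     -- [x^0, X_0] = 0
    (h04 : br (e6 0) (e6 4) = e6 2 - e6 4)           -- [x^0, X_1] = x^2 − X_1
    (h05 : br (e6 0) (e6 5) = -(e6 1) - e6 5)        -- [x^0, X_2] = −x^1 − X_2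
    (h12 : br (e6 1) (e6 2) = 0)                     -- [x^1, x^2] = 0
    (h13 : br (e6 1) (e6 3) = lam • e6 1)            -- [x^1, X_0] = λ x^1
    (h14 : br (e6 1) (e6 4) = (-lam) • e6 0 + e6 3)  -- [x^1, X_1] = −λ x^0 + X_0
    (h15 : br (e6 1) (e6 5) = 0)                     -- [x^1, X_2] = 0
    (h23 : br (e6 2) (e6 3) = (-lam) • e6 2)         -- [x^2, X_0] = −λ x^2
    (h24 : br (e6 2) (e6 4) = 0)                     -- [x^2, X_1] = 0
    (h25 : br (e6 2) (e6 5) = lam • e6 0 + e6 3)     -- [x^2, X_2] = λ x^0 + X_0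
    (h34 : br (e6 3) (e6 4) = lam • e6 4)            -- [X_0, X_1] = λ X_1
    (h35 : br (e6 3) (e6 5) = (-lam) • e6 5)         -- [X_0, X_2] = −λ X_2
    (h45 : br (e6 4) (e6 5) = e6 3) :                -- [X_1, X_2] = X_0
    ∃ φ : (Fin 6 → ℝ) →ₗ[ℝ] (Matrix (Fin 2) (Fin 2) ℝ × Matrix (Fin 2) (Fin 2) ℝ),
      Function.Injective φ ∧
      Set.range φ = {p | p.1.trace = 0 ∧ p.2.trace = 0} ∧
      ∀ u v, φ (br u v) = φ u * φ v - φ v * φ u := by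
  refine ⟨ddPhi lam, ?_, ?_, ?_⟩
  · -- injectivity via explicit left inverse
    have hLeft : ∀ u, ddPsi lam (ddPhi lam u) = u := by
      intro u
      funext i
      fin_cases i <;> simp [ddPsi, ddPhi] <;> field_simp <;> ring
    exact Function.LeftInverse.injective hLeft
  · -- range = traceless pairs
    ext p
    constructor
    · rintro ⟨u, rfl⟩
      constructor <;> simp [ddPhi, Matrix.trace_fin_two] <;> ring
    · rintro ⟨hp1, hp2⟩
      rw [Matrix.trace_fin_two] at hp1 hp2
      have h1 : p.1 1 1 = -(p.1 0 0) := by linarith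
      have h2 : p.2 1 1 = -(p.2 0 0) := by linarith
      refine ⟨ddPsi lam p, ?_⟩
      refine Prod.ext ?_ ?_ <;> ext a b <;> fin_cases a <;> fin_cases b <;>
        simp [ddPhi, ddPsi, h1, h2] <;> field_simp <;> ring
  · -- bracket is sent to the commutator
    have hzero : ∀ u, br u u = 0 := by
      intro u
      have h := hanti u u
      have h2 : (2 : ℝ) • br u u = 0 := by
        rw [two_smul]; nth_rewrite 2 [h]; simp
      exact (smul_eq_zero.mp h2).resolve_left (by norm_num)
    -- the claimed identity for a pair of basis vectors, in both orders and on the diagonal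
    have crev : ∀ x y : Fin 6 → ℝ,
        ddPhi lam (br x y) = ddPhi lam x * ddPhi lam y - ddPhi lam y * ddPhi lam x →
        ddPhi lam (br y x) = ddPhi lam y * ddPhi lam x - ddPhi lam x * ddPhi lam y := by
      intro x y h
      rw [hanti y x, map_neg, h, neg_sub]
    have cdiag : ∀ x : Fin 6 → ℝ,
        ddPhi lam (br x x) = ddPhi lam x * ddPhi lam x - ddPhi lam x * ddPhi lam x := by
      intro x; rw [hzero, map_zero, sub_self]
    have c01 : ddPhi lam (br (e6 0) (e6 1)) =
        ddPhi lam (e6 0) * ddPhi lam (e6 1) - ddPhi lam (e6 1) * ddPhi lam (e6 0) := by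
      rw [h01]
      refine Prod.ext ?_ ?_ <;> ext a b <;> fin_cases a <;> fin_cases b <;>
        simp [ddPhi, e6, Pi.single_apply, Matrix.mul_apply, Fin.sum_univ_two] <;> ring
    have c02 : ddPhi lam (br (e6 0) (e6 2)) =
        ddPhi lam (e6 0) * ddPhi lam (e6 2) - ddPhi lam (e6 2) * ddPhi lam (e6 0) := by
      rw [h02]
      refine Prod.ext ?_ ?_ <;> ext a b <;> fin_cases a <;> fin_cases b <;>
        simp [ddPhi, e6, Pi.single_apply, Matrix.mul_apply, Fin.sum_univ_two] <;> ring
    have c03 : ddPhi lam (br (e6 0) (e6 3)) =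
        ddPhi lam (e6 0) * ddPhi lam (e6 3) - ddPhi lam (e6 3) * ddPhi lam (e6 0) := by
      rw [h03]
      refine Prod.ext ?_ ?_ <;> ext a b <;> fin_cases a <;> fin_cases b <;>
        simp [ddPhi, e6, Pi.single_apply, Matrix.mul_apply, Fin.sum_univ_two] <;> ring
    have c04 : ddPhi lam (br (e6 0) (e6 4)) =
        ddPhi lam (e6 0) * ddPhi lam (e6 4) - ddPhi lam (e6 4) * ddPhi lam (e6 0) := by
      rw [h04]
      refine Prod.ext ?_ ?_ <;> ext a b <;> fin_cases a <;> fin_cases b <;>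
        simp [ddPhi, e6, Pi.single_apply, Matrix.mul_apply, Fin.sum_univ_two] <;> ring
    have c05 : ddPhi lam (br (e6 0) (e6 5)) =
        ddPhi lam (e6 0) * ddPhi lam (e6 5) - ddPhi lam (e6 5) * ddPhi lam (e6 0) := by
      rw [h05]
      refine Prod.ext ?_ ?_ <;> ext a b <;> fin_cases a <;> fin_cases b <;>
        simp [ddPhi, e6, Pi.single_apply, Matrix.mul_apply, Fin.sum_univ_two] <;> ring
    have c12 : ddPhi lam (br (e6 1) (e6 2)) =
        ddPhi lam (e6 1) * ddPhi lam (e6 2) - ddPhi lam (e6 2) * ddPhi lam (e6 1) := by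
      rw [h12]
      refine Prod.ext ?_ ?_ <;> ext a b <;> fin_cases a <;> fin_cases b <;>
        simp [ddPhi, e6, Pi.single_apply, Matrix.mul_apply, Fin.sum_univ_two] <;> ring
    have c13 : ddPhi lam (br (e6 1) (e6 3)) =
        ddPhi lam (e6 1) * ddPhi lam (e6 3) - ddPhi lam (e6 3) * ddPhi lam (e6 1) := by
      rw [h13]
      refine Prod.ext ?_ ?_ <;> ext a b <;> fin_cases a <;> fin_cases b <;>
        simp [ddPhi, e6, Pi.single_apply, Matrix.mul_apply, Fin.sum_univ_two] <;> ring
    have c14 : ddPhi lam (br (e6 1) (e6 4)) =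
        ddPhi lam (e6 1) * ddPhi lam (e6 4) - ddPhi lam (e6 4) * ddPhi lam (e6 1) := by
      rw [h14]
      refine Prod.ext ?_ ?_ <;> ext a b <;> fin_cases a <;> fin_cases b <;>
        simp [ddPhi, e6, Pi.single_apply, Matrix.mul_apply, Fin.sum_univ_two] <;> ring
    have c15 : ddPhi lam (br (e6 1) (e6 5)) =
        ddPhi lam (e6 1) * ddPhi lam (e6 5) - ddPhi lam (e6 5) * ddPhi lam (e6 1) := by
      rw [h15]
      refine Prod.ext ?_ ?_ <;> ext a b <;> fin_cases a <;> fin_cases b <;>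
        simp [ddPhi, e6, Pi.single_apply, Matrix.mul_apply, Fin.sum_univ_two] <;> ring
    have c23 : ddPhi lam (br (e6 2) (e6 3)) =
        ddPhi lam (e6 2) * ddPhi lam (e6 3) - ddPhi lam (e6 3) * ddPhi lam (e6 2) := by
      rw [h23]
      refine Prod.ext ?_ ?_ <;> ext a b <;> fin_cases a <;> fin_cases b <;>
        simp [ddPhi, e6, Pi.single_apply, Matrix.mul_apply, Fin.sum_univ_two] <;> ring
    have c24 : ddPhi lam (br (e6 2) (e6 4)) =
        ddPhi lam (e6 2) * ddPhi lam (e6 4) - ddPhi lam (e6 4) * ddPhi lam (e6 2) := by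
      rw [h24]
      refine Prod.ext ?_ ?_ <;> ext a b <;> fin_cases a <;> fin_cases b <;>
        simp [ddPhi, e6, Pi.single_apply, Matrix.mul_apply, Fin.sum_univ_two] <;> ring
    have c25 : ddPhi lam (br (e6 2) (e6 5)) =
        ddPhi lam (e6 2) * ddPhi lam (e6 5) - ddPhi lam (e6 5) * ddPhi lam (e6 2) := by
      rw [h25]
      refine Prod.ext ?_ ?_ <;> ext a b <;> fin_cases a <;> fin_cases b <;>
        simp [ddPhi, e6, Pi.single_apply, Matrix.mul_apply, Fin.sum_univ_two] <;> ring
    have c34 : ddPhi lam (br (e6 3) (e6 4)) =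
        ddPhi lam (e6 3) * ddPhi lam (e6 4) - ddPhi lam (e6 4) * ddPhi lam (e6 3) := by
      rw [h34]
      refine Prod.ext ?_ ?_ <;> ext a b <;> fin_cases a <;> fin_cases b <;>
        simp [ddPhi, e6, Pi.single_apply, Matrix.mul_apply, Fin.sum_univ_two] <;> ring
    have c35 : ddPhi lam (br (e6 3) (e6 5)) =
        ddPhi lam (e6 3) * ddPhi lam (e6 5) - ddPhi lam (e6 5) * ddPhi lam (e6 3) := by
      rw [h35]
      refine Prod.ext ?_ ?_ <;> ext a b <;> fin_cases a <;> fin_cases b <;>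
        simp [ddPhi, e6, Pi.single_apply, Matrix.mul_apply, Fin.sum_univ_two] <;> ring
    have c45 : ddPhi lam (br (e6 4) (e6 5)) =
        ddPhi lam (e6 4) * ddPhi lam (e6 5) - ddPhi lam (e6 5) * ddPhi lam (e6 4) := by
      rw [h45]
      refine Prod.ext ?_ ?_ <;> ext a b <;> fin_cases a <;> fin_cases b <;>
        simp [ddPhi, e6, Pi.single_apply, Matrix.mul_apply, Fin.sum_univ_two] <;> ring
    have c10 := crev _ _ c01
    have c20 := crev _ _ c02
    have c30 := crev _ _ c03
    have c40 := crev _ _ c04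
    have c50 := crev _ _ c05
    have c21 := crev _ _ c12
    have c31 := crev _ _ c13
    have c41 := crev _ _ c14
    have c51 := crev _ _ c15
    have c32 := crev _ _ c23
    have c42 := crev _ _ c24
    have c52 := crev _ _ c25
    have c43 := crev _ _ c34
    have c53 := crev _ _ c35
    have c54 := crev _ _ c45
    have c00 := cdiag (e6 0)
    have c11 := cdiag (e6 1)
    have c22 := cdiag (e6 2)
    have c33 := cdiag (e6 3)
    have c44 := cdiag (e6 4)
    have c55 := cdiag (e6 5)
    have key : br.compr₂ (ddPhi lam) = commMap (ddPhi lam) := by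
      refine Module.Basis.ext (Pi.basisFun ℝ (Fin 6)) fun i =>
        Module.Basis.ext (Pi.basisFun ℝ (Fin 6)) fun j => ?_
      have hb : ∀ k : Fin 6, (Pi.basisFun ℝ (Fin 6)) k = e6 k := by
        intro k; rw [Pi.basisFun_apply]; rfl
      rw [hb i, hb j, LinearMap.compr₂_apply, commMap_apply]
      fin_cases i <;> fin_cases j <;> assumption
    intro u v
    have h := LinearMap.congr_fun (LinearMap.congr_fun key u) v
    rw [LinearMap.compr₂_apply, commMap_apply] at h
    exact h
end

section
/- The 6-dimensional real Lie algebra A with basis {x^0, x^1, x^2, X_0, X_1, X_2} and nonzero brackets [x^0,x^1] = x^1, [x^0,x^2] = x^2, [X_0,X_1] = X_0, [X_0,X_2] = X_1, [X_1,X_2] = X_2, [x^0,X_0] = x^1, [x^0,X_1] = −x^0 − X_1, [x^0,X_2] = −X_2, [x^1,X_0] = x^2, [x^1,X_1] = X_0, [x^1,X_2] = −x^0, [x^2,X_1] = x^2, [x^2,X_2] = −x^1 + X_0, and the 6-dimensional real Lie algebra B with basis {y^0, y^1, y^2, Y_0, Y_1, Y_2} and nonzero brackets [y^0,y^1] = y^1,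 [y^0,y^2] = y^2, [Y_0,Y_2] = Y_1, [y^0,Y_1] = −Y_1, [y^0,Y_2] = −Y_2, [y^1,Y_0] = y^2, [y^1,Y_1] = Y_0, [y^1,Y_2] = −y^0, [y^2,Y_2] = Y_0, are isomorphic as real Lie algebras. -/
/-- Evaluation of a 6-vector at index 5. -/
@[simp] lemma cons_val_five' {α : Type*} (a b c d e f : α) :
    ![a, b, c, d, e, f] 5 = f := rfl

/-- Auxiliary linear map realizing the isomorphism A → B. -/
noncomputable def phiMap : (Fin 6 → ℝ) →ₗ[ℝ] (Fin 6 → ℝ) where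
  toFun u := ![-u 0 + u 4, 2 * u 5, 4 * u 0, 2 * u 1, u 2, (1/2) * u 1 + (1/2) * u 3]
  map_add' u v := by funext i; fin_cases i <;> simp [Matrix.cons_val_succ] <;> ring
  map_smul' c u := by funext i; fin_cases i <;> simp [Matrix.cons_val_succ] <;> ring

/-- Auxiliary linear map realizing the inverse isomorphism B → A. -/
noncomputable def psiMap : (Fin 6 → ℝ) →ₗ[ℝ] (Fin 6 → ℝ) where
  toFun u := ![(1/4) * u 2, (1/2) * u 3, u 4, -(1/2) * u 3 + 2 * u 5, u 0 + (1/4) * u 2, (1/2) * u 1]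
  map_add' u v := by funext i; fin_cases i <;> simp [Matrix.cons_val_succ] <;> ring
  map_smul' c u := by funext i; fin_cases i <;> simp [Matrix.cons_val_succ] <;> ring

lemma phi_psi : phiMap ∘ₗ psiMap = LinearMap.id := by
  apply LinearMap.ext; intro u; funext k
  fin_cases k <;> simp [phiMap, psiMap, Matrix.cons_val_succ] <;> ring

lemma psi_phi : psiMap ∘ₗ phiMap = LinearMap.id := by
  apply LinearMap.ext; intro u; funext k
  fin_cases k <;> simp [phiMap, psiMap, Matrix.cons_val_succ] <;> ring

lemma p0 : phiMap (e6 0) = -(e6 0) + (4:ℝ) • e6 2 := by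
  funext k; fin_cases k <;> simp [phiMap, e6, Pi.single_apply, Matrix.cons_val_succ]
lemma p1 : phiMap (e6 1) = (2:ℝ) • e6 3 + (1/2 : ℝ) • e6 5 := by
  funext k; fin_cases k <;> simp [phiMap, e6, Pi.single_apply, Matrix.cons_val_succ]
lemma p2 : phiMap (e6 2) = e6 4 := by
  funext k; fin_cases k <;> simp [phiMap, e6, Pi.single_apply, Matrix.cons_val_succ]
lemma p3 : phiMap (e6 3) = (1/2 : ℝ) • e6 5 := by
  funext k; fin_cases k <;> simp [phiMap, e6, Pi.single_apply, Matrix.cons_val_succ]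
lemma p4 : phiMap (e6 4) = e6 0 := by
  funext k; fin_cases k <;> simp [phiMap, e6, Pi.single_apply, Matrix.cons_val_succ]
lemma p5 : phiMap (e6 5) = (2:ℝ) • e6 1 := by
  funext k; fin_cases k <;> simp [phiMap, e6, Pi.single_apply, Matrix.cons_val_succ]

lemma expand6 (u : Fin 6 → ℝ) : u = ∑ i, u i • e6 i := by
  funext k
  simp [e6, Pi.single_apply, Finset.sum_apply]

set_option maxHeartbeats 2000000 in
/-- The Drinfel'd double of type `(r_3(1), sl_2)` (Table II, third column; algebra A,
with basis `{x^0,x^1,x^2,X_0,X_1,X_2}`) and the Drinfel'd double of type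
`(r_3(1), n_3)` (Table II, fifth column; algebra B, with basis
`{y^0,y^1,y^2,Y_0,Y_1,Y_2}`) are isomorphic as real Lie algebras (both are the
(2+1) Poincaré algebra `iso(1,2)`). -/

theorem dd_r31_sl2_iso_dd_r31_n3
    (brA : (Fin 6 → ℝ) →ₗ[ℝ] (Fin 6 → ℝ) →ₗ[ℝ] (Fin 6 → ℝ))
    (hAanti : ∀ u v, brA u v = - brA v u)
    (hAjac : ∀ u v w, brA u (brA v w) + brA v (brA w u) + brA w (brA u v) = 0)
    (hA01 : brA (e6 0) (e6 1) = e6 1)             -- [x^0, x^1] = x^1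
    (hA02 : brA (e6 0) (e6 2) = e6 2)             -- [x^0, x^2] = x^2
    (hA03 : brA (e6 0) (e6 3) = e6 1)             -- [x^0, X_0] = x^1
    (hA04 : brA (e6 0) (e6 4) = -(e6 0) - e6 4)   -- [x^0, X_1] = −x^0 − X_1
    (hA05 : brA (e6 0) (e6 5) = -(e6 5))          -- [x^0, X_2] = −X_2
    (hA12 : brA (e6 1) (e6 2) = 0)                -- [x^1, x^2] = 0
    (hA13 : brA (e6 1) (e6 3) = e6 2)             -- [x^1, X_0] = x^2
    (hA14 : brA (e6 1) (e6 4) = e6 3)             -- [x^1, X_1] = X_0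
    (hA15 : brA (e6 1) (e6 5) = -(e6 0))          -- [x^1, X_2] = −x^0
    (hA23 : brA (e6 2) (e6 3) = 0)                -- [x^2, X_0] = 0
    (hA24 : brA (e6 2) (e6 4) = e6 2)             -- [x^2, X_1] = x^2
    (hA25 : brA (e6 2) (e6 5) = -(e6 1) + e6 3)   -- [x^2, X_2] = −x^1 + X_0
    (hA34 : brA (e6 3) (e6 4) = e6 3)             -- [X_0, X_1] = X_0
    (hA35 : brA (e6 3) (e6 5) = e6 4)             -- [X_0, X_2] = X_1
    (hA45 : brA (e6 4) (e6 5) = e6 5)             -- [X_1, X_2] = X_2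
    (brB : (Fin 6 → ℝ) →ₗ[ℝ] (Fin 6 → ℝ) →ₗ[ℝ] (Fin 6 → ℝ))
    (hBanti : ∀ u v, brB u v = - brB v u)
    (hBjac : ∀ u v w, brB u (brB v w) + brB v (brB w u) + brB w (brB u v) = 0)
    (hB01 : brB (e6 0) (e6 1) = e6 1)             -- [y^0, y^1] = y^1
    (hB02 : brB (e6 0) (e6 2) = e6 2)             -- [y^0, y^2] = y^2
    (hB03 : brB (e6 0) (e6 3) = 0)                -- [y^0, Y_0] = 0
    (hB04 : brB (e6 0) (e6 4) = -(e6 4))          -- [y^0, Y_1] = −Y_1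
    (hB05 : brB (e6 0) (e6 5) = -(e6 5))          -- [y^0, Y_2] = −Y_2
    (hB12 : brB (e6 1) (e6 2) = 0)                -- [y^1, y^2] = 0
    (hB13 : brB (e6 1) (e6 3) = e6 2)             -- [y^1, Y_0] = y^2
    (hB14 : brB (e6 1) (e6 4) = e6 3)             -- [y^1, Y_1] = Y_0
    (hB15 : brB (e6 1) (e6 5) = -(e6 0))          -- [y^1, Y_2] = −y^0
    (hB23 : brB (e6 2) (e6 3) = 0)                -- [y^2, Y_0] = 0
    (hB24 : brB (e6 2) (e6 4) = 0)                -- [y^2, Y_1] = 0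
    (hB25 : brB (e6 2) (e6 5) = e6 3)             -- [y^2, Y_2] = Y_0
    (hB34 : brB (e6 3) (e6 4) = 0)                -- [Y_0, Y_1] = 0
    (hB35 : brB (e6 3) (e6 5) = e6 4)             -- [Y_0, Y_2] = Y_1
    (hB45 : brB (e6 4) (e6 5) = 0) :              -- [Y_1, Y_2] = 0
    ∃ eqv : (Fin 6 → ℝ) ≃ₗ[ℝ] (Fin 6 → ℝ),
      ∀ u v, eqv (brA u v) = brB (eqv u) (eqv v) := by
  have hAd : ∀ u, brA u u = 0 := by
    intro u
    have h2 : (2:ℝ) • brA u u = 0 := by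
      rw [two_smul]; nth_rewrite 1 [hAanti u u]; simp
    exact (smul_eq_zero.mp h2).resolve_left (by norm_num)
  have hBd : ∀ u, brB u u = 0 := by
    intro u
    have h2 : (2:ℝ) • brB u u = 0 := by
      rw [two_smul]; nth_rewrite 1 [hBanti u u]; simp
    exact (smul_eq_zero.mp h2).resolve_left (by norm_num)
  have A10 : brA (e6 1) (e6 0) = -(e6 1) := by
    rw [hAanti, hA01] <;> try module
  have A20 : brA (e6 2) (e6 0) = -(e6 2) := by
    rw [hAanti, hA02] <;> try module
  have A30 : brA (e6 3) (e6 0) = -(e6 1) := by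
    rw [hAanti, hA03] <;> try module
  have A40 : brA (e6 4) (e6 0) = e6 0 + e6 4 := by
    rw [hAanti, hA04] <;> try module
  have A50 : brA (e6 5) (e6 0) = e6 5 := by
    rw [hAanti, hA05] <;> try module
  have A21 : brA (e6 2) (e6 1) = (0 : Fin 6 → ℝ) := by
    rw [hAanti, hA12] <;> try module
  have A31 : brA (e6 3) (e6 1) = -(e6 2) := by
    rw [hAanti, hA13] <;> try module
  have A41 : brA (e6 4) (e6 1) = -(e6 3) := by
    rw [hAanti, hA14] <;> try module
  have A51 : brA (e6 5) (e6 1) = e6 0 := by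
    rw [hAanti, hA15] <;> try module
  have A32 : brA (e6 3) (e6 2) = (0 : Fin 6 → ℝ) := by
    rw [hAanti, hA23] <;> try module
  have A42 : brA (e6 4) (e6 2) = -(e6 2) := by
    rw [hAanti, hA24] <;> try module
  have A52 : brA (e6 5) (e6 2) = e6 1 + -(e6 3) := by
    rw [hAanti, hA25] <;> try module
  have A43 : brA (e6 4) (e6 3) = -(e6 3) := by
    rw [hAanti, hA34] <;> try module
  have A53 : brA (e6 5) (e6 3) = -(e6 4) := by
    rw [hAanti, hA35] <;> try module
  have A54 : brA (e6 5) (e6 4) = -(e6 5) := by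
    rw [hAanti, hA45] <;> try module
  have B10 : brB (e6 1) (e6 0) = -(e6 1) := by
    rw [hBanti, hB01] <;> try module
  have B20 : brB (e6 2) (e6 0) = -(e6 2) := by
    rw [hBanti, hB02] <;> try module
  have B30 : brB (e6 3) (e6 0) = (0 : Fin 6 → ℝ) := by
    rw [hBanti, hB03] <;> try module
  have B40 : brB (e6 4) (e6 0) = e6 4 := by
    rw [hBanti, hB04] <;> try module
  have B50 : brB (e6 5) (e6 0) = e6 5 := by
    rw [hBanti, hB05] <;> try module
  have B21 : brB (e6 2) (e6 1) = (0 : Fin 6 → ℝ) := by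
    rw [hBanti, hB12] <;> try module
  have B31 : brB (e6 3) (e6 1) = -(e6 2) := by
    rw [hBanti, hB13] <;> try module
  have B41 : brB (e6 4) (e6 1) = -(e6 3) := by
    rw [hBanti, hB14] <;> try module
  have B51 : brB (e6 5) (e6 1) = e6 0 := by
    rw [hBanti, hB15] <;> try module
  have B32 : brB (e6 3) (e6 2) = (0 : Fin 6 → ℝ) := by
    rw [hBanti, hB23] <;> try module
  have B42 : brB (e6 4) (e6 2) = (0 : Fin 6 → ℝ) := by
    rw [hBanti, hB24] <;> try module
  have B52 : brB (e6 5) (e6 2) = -(e6 3) := by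
    rw [hBanti, hB25] <;> try module
  have B43 : brB (e6 4) (e6 3) = (0 : Fin 6 → ℝ) := by
    rw [hBanti, hB34] <;> try module
  have B53 : brB (e6 5) (e6 3) = -(e6 4) := by
    rw [hBanti, hB35] <;> try module
  have B54 : brB (e6 5) (e6 4) = (0 : Fin 6 → ℝ) := by
    rw [hBanti, hB45] <;> try module

  have key : ∀ i j : Fin 6, phiMap (brA (e6 i) (e6 j)) = brB (phiMap (e6 i)) (phiMap (e6 j)) := by
    have hcases : ∀ i : Fin 6, i = 0 ∨ i = 1 ∨ i = 2 ∨ i = 3 ∨ i = 4 ∨ i = 5 := by decide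
    intro i j
    rcases hcases i with rfl | rfl | rfl | rfl | rfl | rfl <;>
      rcases hcases j with rfl | rfl | rfl | rfl | rfl | rfl <;>
      simp only [Fin.isValue, hAd, hBd, hA01, hA02, hA03, hA04, hA05, hA12, hA13, hA14, hA15, hA23, hA24, hA25, hA34, hA35, hA45, A10, A20, A30, A40, A50, A21, A31, A41, A51, A32, A42, A52, A43, A53, A54, hB01, hB02, hB03, hB04, hB05, hB12, hB13, hB14, hB15, hB23, hB24, hB25, hB34, hB35, hB45, B10, B20, B30, B40, B50, B21, B31, B41, B51, B32, B42, B52, B43, B53, B54,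
        p0, p1, p2, p3, p4, p5, map_add, map_neg, map_smul, map_sub, map_zero,
        LinearMap.add_apply, LinearMap.neg_apply, LinearMap.smul_apply, LinearMap.zero_apply,
        smul_add, smul_neg, smul_smul, smul_zero, neg_neg, neg_add, neg_zero, add_zero, zero_add] <;>
      first
        | module
        | (funext k; fin_cases k <;> simp [e6, Pi.single_apply] <;> ring)
  refine ⟨LinearEquiv.ofLinear phiMap psiMap phi_psi psi_phi, ?_⟩
  intro u v
  simp only [LinearEquiv.ofLinear_apply]
  rw [expand6 u, expand6 v]
  simp only [map_sum, map_smul, LinearMap.sum_apply, LinearMap.smul_apply, Finset.smul_sum,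
    smul_smul, key]
end

section
/- Let ω = ±1. The 6-dimensional real Lie algebra with basis {y^0, y^1, y^2, Y_0, Y_1, Y_2} and nonzero brackets [y^0,y^1] = y^1, [y^0,y^2] = y^2, [Y_0,Y_2] = Y_1, [Y_1,Y_2] = ω Y_0, [y^0,Y_1] = ω y^2 − Y_1, [y^0,Y_2] = −ω y^1 − Y_2, [y^1,Y_0] = y^2, [y^1,Y_1] = Y_0, [y^1,Y_2] = −y^0, [y^2,Y_2] = Y_0 is isomorphic, as a real Lie algebra, to the 6-dimensional real Lie algebra with basis {x^0, x^1, x^2, X_0, X_1, X_2} and nonzero brackets [x^0,x^1] = x^1, [x^0,x^2] = x^2, [X_0,X_1] = X_0, [X_0,X_2] = X_1, [X_1,X_2] = X_2, [x^0,X_0] = x^1, [x^0,X_1] = −x^0 − X_1, [x^0,X_2] = −X_2, [x^1,X_0] = x^2, [x^1,X_1] = X_0, [x^1,X_2] = −x^0, [x^2,X_1] = x^2, [x^2,X_2] = −x^1 + X_0. -/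
private theorem fv0 : ((0:Fin 6):ℕ) = 0 := rfl
private theorem fv1 : ((1:Fin 6):ℕ) = 1 := rfl
private theorem fv2 : ((2:Fin 6):ℕ) = 2 := rfl
private theorem fv3 : ((3:Fin 6):ℕ) = 3 := rfl
private theorem fv4 : ((4:Fin 6):ℕ) = 4 := rfl
private theorem fv5 : ((5:Fin 6):ℕ) = 5 := rfl

section
variable {α : Type*} (a b c d e f : α)
private theorem vec6_0 : ![a,b,c,d,e,f] 0 = a := rfl
private theorem vec6_1 : ![a,b,c,d,e,f] 1 = b := rfl
private theorem vec6_2 : ![a,b,c,d,e,f] 2 = c := rfl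
private theorem vec6_3 : ![a,b,c,d,e,f] 3 = d := rfl
private theorem vec6_4 : ![a,b,c,d,e,f] 4 = e := rfl
private theorem vec6_5 : ![a,b,c,d,e,f] 5 = f := rfl
private theorem vec6_0' (h : 0 < 6) : ![a,b,c,d,e,f] ⟨0,h⟩ = a := rfl
private theorem vec6_1' (h : 1 < 6) : ![a,b,c,d,e,f] ⟨1,h⟩ = b := rfl
private theorem vec6_2' (h : 2 < 6) : ![a,b,c,d,e,f] ⟨2,h⟩ = c := rfl
private theorem vec6_3' (h : 3 < 6) : ![a,b,c,d,e,f] ⟨3,h⟩ = d := rfl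
private theorem vec6_4' (h : 4 < 6) : ![a,b,c,d,e,f] ⟨4,h⟩ = e := rfl
private theorem vec6_5' (h : 5 < 6) : ![a,b,c,d,e,f] ⟨5,h⟩ = f := rfl
end

private theorem e6mk0 (h : 0 < 6) : e6 ⟨0,h⟩ = e6 0 := rfl
private theorem e6mk1 (h : 1 < 6) : e6 ⟨1,h⟩ = e6 1 := rfl
private theorem e6mk2 (h : 2 < 6) : e6 ⟨2,h⟩ = e6 2 := rfl
private theorem e6mk3 (h : 3 < 6) : e6 ⟨3,h⟩ = e6 3 := rfl
private theorem e6mk4 (h : 4 < 6) : e6 ⟨4,h⟩ = e6 4 := rfl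
private theorem e6mk5 (h : 5 < 6) : e6 ⟨5,h⟩ = e6 5 := rfl

set_option maxHeartbeats 1600000 in
/-- The Drinfel'd double of type `(r_3(1), r_3(−1)/s_3(0))` (Table II, sixth column;
algebra A, basis `{y^0,y^1,y^2,Y_0,Y_1,Y_2}`, with `ω = ±1`) is isomorphic as a real
Lie algebra to the Drinfel'd double of type `(r_3(1), sl_2)` (Table II, third column;
algebra B, basis `{x^0,x^1,x^2,X_0,X_1,X_2}`): both are the (2+1) Poincaré
algebra. -/
theorem dd_r31_r3m1_iso_dd_r31_sl2 (om : ℝ) (hom : om = 1 ∨ om = -1)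
    (brA : (Fin 6 → ℝ) →ₗ[ℝ] (Fin 6 → ℝ) →ₗ[ℝ] (Fin 6 → ℝ))
    (hAanti : ∀ u v, brA u v = - brA v u)
    (hAjac : ∀ u v w, brA u (brA v w) + brA v (brA w u) + brA w (brA u v) = 0)
    (hA01 : brA (e6 0) (e6 1) = e6 1)                 -- [y^0, y^1] = y^1
    (hA02 : brA (e6 0) (e6 2) = e6 2)                 -- [y^0, y^2] = y^2
    (hA03 : brA (e6 0) (e6 3) = 0)                    -- [y^0, Y_0] = 0
    (hA04 : brA (e6 0) (e6 4) = om • e6 2 - e6 4)     -- [y^0, Y_1] = ω y^2 − Y_1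
    (hA05 : brA (e6 0) (e6 5) = (-om) • e6 1 - e6 5)  -- [y^0, Y_2] = −ω y^1 − Y_2
    (hA12 : brA (e6 1) (e6 2) = 0)                    -- [y^1, y^2] = 0
    (hA13 : brA (e6 1) (e6 3) = e6 2)                 -- [y^1, Y_0] = y^2
    (hA14 : brA (e6 1) (e6 4) = e6 3)                 -- [y^1, Y_1] = Y_0
    (hA15 : brA (e6 1) (e6 5) = -(e6 0))              -- [y^1, Y_2] = −y^0
    (hA23 : brA (e6 2) (e6 3) = 0)                    -- [y^2, Y_0] = 0
    (hA24 : brA (e6 2) (e6 4) = 0)                    -- [y^2, Y_1] = 0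
    (hA25 : brA (e6 2) (e6 5) = e6 3)                 -- [y^2, Y_2] = Y_0
    (hA34 : brA (e6 3) (e6 4) = 0)                    -- [Y_0, Y_1] = 0
    (hA35 : brA (e6 3) (e6 5) = e6 4)                 -- [Y_0, Y_2] = Y_1
    (hA45 : brA (e6 4) (e6 5) = om • e6 3)            -- [Y_1, Y_2] = ω Y_0
    (brB : (Fin 6 → ℝ) →ₗ[ℝ] (Fin 6 → ℝ) →ₗ[ℝ] (Fin 6 → ℝ))
    (hBanti : ∀ u v, brB u v = - brB v u)
    (hBjac : ∀ u v w, brB u (brB v w) + brB v (brB w u) + brB w (brB u v) = 0)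
    (hB01 : brB (e6 0) (e6 1) = e6 1)                 -- [x^0, x^1] = x^1
    (hB02 : brB (e6 0) (e6 2) = e6 2)                 -- [x^0, x^2] = x^2
    (hB03 : brB (e6 0) (e6 3) = e6 1)                 -- [x^0, X_0] = x^1
    (hB04 : brB (e6 0) (e6 4) = -(e6 0) - e6 4)       -- [x^0, X_1] = −x^0 − X_1
    (hB05 : brB (e6 0) (e6 5) = -(e6 5))              -- [x^0, X_2] = −X_2
    (hB12 : brB (e6 1) (e6 2) = 0)                    -- [x^1, x^2] = 0
    (hB13 : brB (e6 1) (e6 3) = e6 2)                 -- [x^1, X_0] = x^2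
    (hB14 : brB (e6 1) (e6 4) = e6 3)                 -- [x^1, X_1] = X_0
    (hB15 : brB (e6 1) (e6 5) = -(e6 0))              -- [x^1, X_2] = −x^0
    (hB23 : brB (e6 2) (e6 3) = 0)                    -- [x^2, X_0] = 0
    (hB24 : brB (e6 2) (e6 4) = e6 2)                 -- [x^2, X_1] = x^2
    (hB25 : brB (e6 2) (e6 5) = -(e6 1) + e6 3)       -- [x^2, X_2] = −x^1 + X_0
    (hB34 : brB (e6 3) (e6 4) = e6 3)                 -- [X_0, X_1] = X_0
    (hB35 : brB (e6 3) (e6 5) = e6 4)                 -- [X_0, X_2] = X_1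
    (hB45 : brB (e6 4) (e6 5) = e6 5) :               -- [X_1, X_2] = X_2
    ∃ eqv : (Fin 6 → ℝ) ≃ₗ[ℝ] (Fin 6 → ℝ),
      ∀ u v, eqv (brA u v) = brB (eqv u) (eqv v) := by
  have hA10 : brA (e6 1) (e6 0) = -(e6 1) := by rw [hAanti, hA01]
  have hA20 : brA (e6 2) (e6 0) = -(e6 2) := by rw [hAanti, hA02]
  have hA30 : brA (e6 3) (e6 0) = -((0 : Fin 6 → ℝ)) := by rw [hAanti, hA03]
  have hA40 : brA (e6 4) (e6 0) = -(om • e6 2 - e6 4) := by rw [hAanti, hA04]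
  have hA50 : brA (e6 5) (e6 0) = -((-om) • e6 1 - e6 5) := by rw [hAanti, hA05]
  have hA21 : brA (e6 2) (e6 1) = -((0 : Fin 6 → ℝ)) := by rw [hAanti, hA12]
  have hA31 : brA (e6 3) (e6 1) = -(e6 2) := by rw [hAanti, hA13]
  have hA41 : brA (e6 4) (e6 1) = -(e6 3) := by rw [hAanti, hA14]
  have hA51 : brA (e6 5) (e6 1) = -(-(e6 0)) := by rw [hAanti, hA15]
  have hA32 : brA (e6 3) (e6 2) = -((0 : Fin 6 → ℝ)) := by rw [hAanti, hA23]
  have hA42 : brA (e6 4) (e6 2) = -((0 : Fin 6 → ℝ)) := by rw [hAanti, hA24]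
  have hA52 : brA (e6 5) (e6 2) = -(e6 3) := by rw [hAanti, hA25]
  have hA43 : brA (e6 4) (e6 3) = -((0 : Fin 6 → ℝ)) := by rw [hAanti, hA34]
  have hA53 : brA (e6 5) (e6 3) = -(e6 4) := by rw [hAanti, hA35]
  have hA54 : brA (e6 5) (e6 4) = -(om • e6 3) := by rw [hAanti, hA45]
  have hB10 : brB (e6 1) (e6 0) = -(e6 1) := by rw [hBanti, hB01]
  have hB20 : brB (e6 2) (e6 0) = -(e6 2) := by rw [hBanti, hB02]
  have hB30 : brB (e6 3) (e6 0) = -(e6 1) := by rw [hBanti, hB03]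
  have hB40 : brB (e6 4) (e6 0) = -(-(e6 0) - e6 4) := by rw [hBanti, hB04]
  have hB50 : brB (e6 5) (e6 0) = -(-(e6 5)) := by rw [hBanti, hB05]
  have hB21 : brB (e6 2) (e6 1) = -((0 : Fin 6 → ℝ)) := by rw [hBanti, hB12]
  have hB31 : brB (e6 3) (e6 1) = -(e6 2) := by rw [hBanti, hB13]
  have hB41 : brB (e6 4) (e6 1) = -(e6 3) := by rw [hBanti, hB14]
  have hB51 : brB (e6 5) (e6 1) = -(-(e6 0)) := by rw [hBanti, hB15]
  have hB32 : brB (e6 3) (e6 2) = -((0 : Fin 6 → ℝ)) := by rw [hBanti, hB23]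
  have hB42 : brB (e6 4) (e6 2) = -(e6 2) := by rw [hBanti, hB24]
  have hB52 : brB (e6 5) (e6 2) = -(-(e6 1) + e6 3) := by rw [hBanti, hB25]
  have hB43 : brB (e6 4) (e6 3) = -(e6 3) := by rw [hBanti, hB34]
  have hB53 : brB (e6 5) (e6 3) = -(e6 4) := by rw [hBanti, hB35]
  have hB54 : brB (e6 5) (e6 4) = -(e6 5) := by rw [hBanti, hB45]

  have hAd : ∀ u, brA u u = 0 := by
    intro u
    have h2 : (2:ℝ) • brA u u = 0 := by
      rw [two_smul]; nth_rewrite 2 [hAanti u u]; simp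
    simpa using h2
  have hBd : ∀ u, brB u u = 0 := by
    intro u
    have h2 : (2:ℝ) • brB u u = 0 := by
      rw [two_smul]; nth_rewrite 2 [hBanti u u]; simp
    simpa using h2
  set T : Matrix (Fin 6) (Fin 6) ℝ :=
    !![1,0,0,0,1,0; 0,1,0,-1,0,-(om/2); 0,0,1,0,om/2,0;
       0,0,0,1,0,0; 0,0,0,0,1,0; 0,0,0,0,0,1] with hT
  set S : Matrix (Fin 6) (Fin 6) ℝ :=
    !![1,0,0,0,-1,0; 0,1,0,1,0,om/2; 0,0,1,0,-(om/2),0;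
       0,0,0,1,0,0; 0,0,0,0,1,0; 0,0,0,0,0,1] with hS
  have hTS : T * S = 1 := by
    ext i j
    fin_cases i <;> fin_cases j <;>
    · simp only [hT, hS, Matrix.mul_apply, Fin.sum_univ_six, Matrix.of_apply,
        Matrix.one_apply, Fin.mk.injEq, vec6_0, vec6_1, vec6_2, vec6_3, vec6_4, vec6_5,
        vec6_0', vec6_1', vec6_2', vec6_3', vec6_4', vec6_5']
      norm_num
  have hST : S * T = 1 := by
    ext i j
    fin_cases i <;> fin_cases j <;>
    · simp only [hT, hS, Matrix.mul_apply, Fin.sum_univ_six, Matrix.of_apply,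
        Matrix.one_apply, Fin.mk.injEq, vec6_0, vec6_1, vec6_2, vec6_3, vec6_4, vec6_5,
        vec6_0', vec6_1', vec6_2', vec6_3', vec6_4', vec6_5']
      norm_num
  set f : (Fin 6 → ℝ) →ₗ[ℝ] (Fin 6 → ℝ) := Matrix.toLin' T with hf
  have ht0 : f (e6 0) = e6 0 := by
    funext k
    fin_cases k <;>
      norm_num [hf, hT, Matrix.toLin'_apply, Matrix.mulVec_single, Matrix.of_apply,
        e6, Pi.single_apply, Fin.ext_iff, fv0, fv1, fv2, fv3, fv4, fv5,
        vec6_0, vec6_1, vec6_2, vec6_3, vec6_4, vec6_5,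
        vec6_0', vec6_1', vec6_2', vec6_3', vec6_4', vec6_5']
  have ht1 : f (e6 1) = e6 1 := by
    funext k
    fin_cases k <;>
      norm_num [hf, hT, Matrix.toLin'_apply, Matrix.mulVec_single, Matrix.of_apply,
        e6, Pi.single_apply, Fin.ext_iff, fv0, fv1, fv2, fv3, fv4, fv5,
        vec6_0, vec6_1, vec6_2, vec6_3, vec6_4, vec6_5,
        vec6_0', vec6_1', vec6_2', vec6_3', vec6_4', vec6_5']
  have ht2 : f (e6 2) = e6 2 := by
    funext k
    fin_cases k <;>
      norm_num [hf, hT, Matrix.toLin'_apply, Matrix.mulVec_single, Matrix.of_apply,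
        e6, Pi.single_apply, Fin.ext_iff, fv0, fv1, fv2, fv3, fv4, fv5,
        vec6_0, vec6_1, vec6_2, vec6_3, vec6_4, vec6_5,
        vec6_0', vec6_1', vec6_2', vec6_3', vec6_4', vec6_5']
  have ht3 : f (e6 3) = -(e6 1) + e6 3 := by
    funext k
    fin_cases k <;>
      norm_num [hf, hT, Matrix.toLin'_apply, Matrix.mulVec_single, Matrix.of_apply,
        e6, Pi.single_apply, Fin.ext_iff, fv0, fv1, fv2, fv3, fv4, fv5,
        vec6_0, vec6_1, vec6_2, vec6_3, vec6_4, vec6_5,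
        vec6_0', vec6_1', vec6_2', vec6_3', vec6_4', vec6_5']
  have ht4 : f (e6 4) = e6 0 + (om/2) • e6 2 + e6 4 := by
    funext k
    fin_cases k <;>
      norm_num [hf, hT, Matrix.toLin'_apply, Matrix.mulVec_single, Matrix.of_apply,
        e6, Pi.single_apply, Fin.ext_iff, fv0, fv1, fv2, fv3, fv4, fv5,
        vec6_0, vec6_1, vec6_2, vec6_3, vec6_4, vec6_5,
        vec6_0', vec6_1', vec6_2', vec6_3', vec6_4', vec6_5']
  have ht5 : f (e6 5) = (-(om/2)) • e6 1 + e6 5 := by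
    funext k
    fin_cases k <;>
      norm_num [hf, hT, Matrix.toLin'_apply, Matrix.mulVec_single, Matrix.of_apply,
        e6, Pi.single_apply, Fin.ext_iff, fv0, fv1, fv2, fv3, fv4, fv5,
        vec6_0, vec6_1, vec6_2, vec6_3, vec6_4, vec6_5,
        vec6_0', vec6_1', vec6_2', vec6_3', vec6_4', vec6_5']
  have key : ∀ i j : Fin 6, f (brA (e6 i) (e6 j)) = brB (f (e6 i)) (f (e6 j)) := by
    intro i j
    fin_cases i <;> fin_cases j <;>
    · simp only [e6mk0, e6mk1, e6mk2, e6mk3, e6mk4, e6mk5, Fin.isValue, hAd, hBd, hA01, hA02, hA03, hA04, hA05, hA12, hA13,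
        hA14, hA15, hA23, hA24, hA25, hA34, hA35, hA45, hA10, hA20, hA30, hA40,
        hA50, hA21, hA31, hA41, hA51, hA32, hA42, hA52, hA43, hA53, hA54,
        ht0, ht1, ht2, ht3, ht4, ht5, map_add, map_smul, map_neg, map_sub, map_zero,
        LinearMap.add_apply, LinearMap.smul_apply, LinearMap.neg_apply,
        LinearMap.sub_apply, LinearMap.zero_apply,
        hB01, hB02, hB03, hB04, hB05, hB12, hB13, hB14, hB15, hB23, hB24, hB25,
        hB34, hB35, hB45, hB10, hB20, hB30, hB40, hB50, hB21, hB31, hB41, hB51,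
        hB32, hB42, hB52, hB43, hB53, hB54]
      try module
  have hrep : ∀ u : Fin 6 → ℝ, u = ∑ i : Fin 6, u i • e6 i := by
    intro u
    funext k
    simp [e6, Finset.sum_apply, Pi.single_apply]
  refine ⟨LinearEquiv.ofLinear f (Matrix.toLin' S)
      (by rw [hf, ← Matrix.toLin'_mul, hTS, Matrix.toLin'_one])
      (by rw [hf, ← Matrix.toLin'_mul, hST, Matrix.toLin'_one]), ?_⟩
  intro u v
  simp only [LinearEquiv.ofLinear_apply]
  conv_lhs => rw [hrep u, hrep v]
  conv_rhs => rw [hrep u, hrep v]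
  simp only [map_sum, map_smul, LinearMap.sum_apply, LinearMap.smul_apply,
    Finset.smul_sum]
  refine Finset.sum_congr rfl fun i _ => Finset.sum_congr rfl fun j _ => ?_
  rw [key j i]
end

section
/- Let λ and ρ be nonzero real numbers. The 6-dimensional real Lie algebra with basis {x^0, x^1, x^2, X_0, X_1, X_2} and nonzero brackets [x^0,x^1] = x^1, [x^0,x^2] = ρ x^2, [X_0,X_1] = λ X_1, [X_0,X_2] = −λρ X_2, [x^0,X_1] = −X_1, [x^0,X_2] = −ρ X_2, [x^1,X_0] = λ x^1, [x^1,X_1] = −λ x^0 + X_0, [x^2,X_0] = −λρ x^2, [x^2,X_2] = ρ(λ x^0 + X_0) (all other brackets of basis elements vanish) is isomorphic, as a real Lie algebra, to the direct sum sl(2,R) ⊕ sl(2,R), where sl(2,R) is the Lie algebra of traceless 2×2 real matrices. -/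
@[simp] lemma vec6_two {α : Type*} (a b c d e f : α) : (![a,b,c,d,e,f]) 2 = c := rfl
@[simp] lemma vec6_three {α : Type*} (a b c d e f : α) : (![a,b,c,d,e,f]) 3 = d := rfl
@[simp] lemma vec6_four {α : Type*} (a b c d e f : α) : (![a,b,c,d,e,f]) 4 = e := rfl
@[simp] lemma vec6_five {α : Type*} (a b c d e f : α) : (![a,b,c,d,e,f]) 5 = f := rfl

/-- The explicit isomorphism onto `sl₂ × sl₂`. -/
noncomputable def phiL (lam rho : ℝ) :
    (Fin 6 → ℝ) →ₗ[ℝ] (Matrix (Fin 2) (Fin 2) ℝ × Matrix (Fin 2) (Fin 2) ℝ) where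
  toFun v :=
    (!![-(v 0)/2 + lam * v 3/2, -(lam * v 4); v 1, v 0/2 - lam * v 3/2],
     !![rho * v 0/2 + lam * rho * v 3/2, v 2;
        lam * rho^2 * v 5, -(rho * v 0)/2 - lam * rho * v 3/2])
  map_add' u v := by
    refine Prod.ext ?_ ?_ <;>
      · ext i j; fin_cases i <;> fin_cases j <;> first | (simp; ring) | simp
  map_smul' c v := by
    refine Prod.ext ?_ ?_ <;>
      · ext i j; fin_cases i <;> fin_cases j <;> first | (simp; ring) | simp

@[simp] lemma phiL_apply (lam rho : ℝ) (v : Fin 6 → ℝ) :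
    phiL lam rho v =
    (!![-(v 0)/2 + lam * v 3/2, -(lam * v 4); v 1, v 0/2 - lam * v 3/2],
     !![rho * v 0/2 + lam * rho * v 3/2, v 2;
        lam * rho^2 * v 5, -(rho * v 0)/2 - lam * rho * v 3/2]) := rfl

set_option maxHeartbeats 1000000 in
lemma comm01 (lam rho : ℝ) :
    phiL lam rho (e6 1) =
    phiL lam rho (e6 0) * phiL lam rho (e6 1) - phiL lam rho (e6 1) * phiL lam rho (e6 0) := by
  refine Prod.ext ?_ ?_ <;>
    · ext a b
      fin_cases a <;> fin_cases b <;>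
        (simp [e6, Pi.single_apply, Matrix.mul_apply, Fin.sum_univ_two]; try ring)

set_option maxHeartbeats 1000000 in
lemma comm02 (lam rho : ℝ) :
    phiL lam rho (rho • e6 2) =
    phiL lam rho (e6 0) * phiL lam rho (e6 2) - phiL lam rho (e6 2) * phiL lam rho (e6 0) := by
  refine Prod.ext ?_ ?_ <;>
    · ext a b
      fin_cases a <;> fin_cases b <;>
        (simp [e6, Pi.single_apply, Matrix.mul_apply, Fin.sum_univ_two]; try ring)

set_option maxHeartbeats 1000000 in
lemma comm03 (lam rho : ℝ) :
    phiL lam rho ((0 : Fin 6 → ℝ)) =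
    phiL lam rho (e6 0) * phiL lam rho (e6 3) - phiL lam rho (e6 3) * phiL lam rho (e6 0) := by
  refine Prod.ext ?_ ?_ <;>
    · ext a b
      fin_cases a <;> fin_cases b <;>
        (simp [e6, Pi.single_apply, Matrix.mul_apply, Fin.sum_univ_two]; try ring)

set_option maxHeartbeats 1000000 in
lemma comm04 (lam rho : ℝ) :
    phiL lam rho (-(e6 4)) =
    phiL lam rho (e6 0) * phiL lam rho (e6 4) - phiL lam rho (e6 4) * phiL lam rho (e6 0) := by
  refine Prod.ext ?_ ?_ <;>
    · ext a b
      fin_cases a <;> fin_cases b <;>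
        (simp [e6, Pi.single_apply, Matrix.mul_apply, Fin.sum_univ_two]; try ring)

set_option maxHeartbeats 1000000 in
lemma comm05 (lam rho : ℝ) :
    phiL lam rho ((-rho) • e6 5) =
    phiL lam rho (e6 0) * phiL lam rho (e6 5) - phiL lam rho (e6 5) * phiL lam rho (e6 0) := by
  refine Prod.ext ?_ ?_ <;>
    · ext a b
      fin_cases a <;> fin_cases b <;>
        (simp [e6, Pi.single_apply, Matrix.mul_apply, Fin.sum_univ_two]; try ring)

set_option maxHeartbeats 1000000 in
lemma comm12 (lam rho : ℝ) :
    phiL lam rho ((0 : Fin 6 → ℝ)) =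
    phiL lam rho (e6 1) * phiL lam rho (e6 2) - phiL lam rho (e6 2) * phiL lam rho (e6 1) := by
  refine Prod.ext ?_ ?_ <;>
    · ext a b
      fin_cases a <;> fin_cases b <;>
        (simp [e6, Pi.single_apply, Matrix.mul_apply, Fin.sum_univ_two]; try ring)

set_option maxHeartbeats 1000000 in
lemma comm13 (lam rho : ℝ) :
    phiL lam rho (lam • e6 1) =
    phiL lam rho (e6 1) * phiL lam rho (e6 3) - phiL lam rho (e6 3) * phiL lam rho (e6 1) := by
  refine Prod.ext ?_ ?_ <;>
    · ext a b
      fin_cases a <;> fin_cases b <;>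
        (simp [e6, Pi.single_apply, Matrix.mul_apply, Fin.sum_univ_two]; try ring)

set_option maxHeartbeats 1000000 in
lemma comm14 (lam rho : ℝ) :
    phiL lam rho ((-lam) • e6 0 + e6 3) =
    phiL lam rho (e6 1) * phiL lam rho (e6 4) - phiL lam rho (e6 4) * phiL lam rho (e6 1) := by
  refine Prod.ext ?_ ?_ <;>
    · ext a b
      fin_cases a <;> fin_cases b <;>
        (simp [e6, Pi.single_apply, Matrix.mul_apply, Fin.sum_univ_two]; try ring)

set_option maxHeartbeats 1000000 in
lemma comm15 (lam rho : ℝ) :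
    phiL lam rho ((0 : Fin 6 → ℝ)) =
    phiL lam rho (e6 1) * phiL lam rho (e6 5) - phiL lam rho (e6 5) * phiL lam rho (e6 1) := by
  refine Prod.ext ?_ ?_ <;>
    · ext a b
      fin_cases a <;> fin_cases b <;>
        (simp [e6, Pi.single_apply, Matrix.mul_apply, Fin.sum_univ_two]; try ring)

set_option maxHeartbeats 1000000 in
lemma comm23 (lam rho : ℝ) :
    phiL lam rho ((-(lam * rho)) • e6 2) =
    phiL lam rho (e6 2) * phiL lam rho (e6 3) - phiL lam rho (e6 3) * phiL lam rho (e6 2) := by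
  refine Prod.ext ?_ ?_ <;>
    · ext a b
      fin_cases a <;> fin_cases b <;>
        (simp [e6, Pi.single_apply, Matrix.mul_apply, Fin.sum_univ_two]; try ring)

set_option maxHeartbeats 1000000 in
lemma comm24 (lam rho : ℝ) :
    phiL lam rho ((0 : Fin 6 → ℝ)) =
    phiL lam rho (e6 2) * phiL lam rho (e6 4) - phiL lam rho (e6 4) * phiL lam rho (e6 2) := by
  refine Prod.ext ?_ ?_ <;>
    · ext a b
      fin_cases a <;> fin_cases b <;>
        (simp [e6, Pi.single_apply, Matrix.mul_apply, Fin.sum_univ_two]; try ring)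

set_option maxHeartbeats 1000000 in
lemma comm25 (lam rho : ℝ) :
    phiL lam rho ((rho * lam) • e6 0 + rho • e6 3) =
    phiL lam rho (e6 2) * phiL lam rho (e6 5) - phiL lam rho (e6 5) * phiL lam rho (e6 2) := by
  refine Prod.ext ?_ ?_ <;>
    · ext a b
      fin_cases a <;> fin_cases b <;>
        (simp [e6, Pi.single_apply, Matrix.mul_apply, Fin.sum_univ_two]; try ring)

set_option maxHeartbeats 1000000 in
lemma comm34 (lam rho : ℝ) :
    phiL lam rho (lam • e6 4) =
    phiL lam rho (e6 3) * phiL lam rho (e6 4) - phiL lam rho (e6 4) * phiL lam rho (e6 3) := by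
  refine Prod.ext ?_ ?_ <;>
    · ext a b
      fin_cases a <;> fin_cases b <;>
        (simp [e6, Pi.single_apply, Matrix.mul_apply, Fin.sum_univ_two]; try ring)

set_option maxHeartbeats 1000000 in
lemma comm35 (lam rho : ℝ) :
    phiL lam rho ((-(lam * rho)) • e6 5) =
    phiL lam rho (e6 3) * phiL lam rho (e6 5) - phiL lam rho (e6 5) * phiL lam rho (e6 3) := by
  refine Prod.ext ?_ ?_ <;>
    · ext a b
      fin_cases a <;> fin_cases b <;>
        (simp [e6, Pi.single_apply, Matrix.mul_apply, Fin.sum_univ_two]; try ring)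

set_option maxHeartbeats 1000000 in
lemma comm45 (lam rho : ℝ) :
    phiL lam rho ((0 : Fin 6 → ℝ)) =
    phiL lam rho (e6 4) * phiL lam rho (e6 5) - phiL lam rho (e6 5) * phiL lam rho (e6 4) := by
  refine Prod.ext ?_ ?_ <;>
    · ext a b
      fin_cases a <;> fin_cases b <;>
        (simp [e6, Pi.single_apply, Matrix.mul_apply, Fin.sum_univ_two]; try ring)

set_option maxHeartbeats 1000000 in
/-- The Drinfel'd double of type `(r_3(ρ), r_3(−ρ))` (Table III, third column), with
nonzero parameters `λ` and `ρ`, is isomorphic, as a real Lie algebra, to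
`sl(2,ℝ) ⊕ sl(2,ℝ)`: there is an injective linear map into the product of two copies
of the 2×2 real matrices whose range consists exactly of the pairs of traceless
matrices and which sends the double bracket to the (componentwise) commutator. -/
theorem dd_r3rho_iso_sl2_sum_sl2 (lam rho : ℝ) (hlam : lam ≠ 0) (hrho : rho ≠ 0)
    (br : (Fin 6 → ℝ) →ₗ[ℝ] (Fin 6 → ℝ) →ₗ[ℝ] (Fin 6 → ℝ))
    (hanti : ∀ u v, br u v = - br v u)
    (hjac : ∀ u v w, br u (br v w) + br v (br w u) + br w (br u v) = 0)
    (h01 : br (e6 0) (e6 1) = e6 1)                  -- [x^0, x^1] = x^1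
    (h02 : br (e6 0) (e6 2) = rho • e6 2)            -- [x^0, x^2] = ρ x^2
    (h03 : br (e6 0) (e6 3) = 0)                     -- [x^0, X_0] = 0
    (h04 : br (e6 0) (e6 4) = -(e6 4))               -- [x^0, X_1] = −X_1
    (h05 : br (e6 0) (e6 5) = (-rho) • e6 5)         -- [x^0, X_2] = −ρ X_2
    (h12 : br (e6 1) (e6 2) = 0)                     -- [x^1, x^2] = 0
    (h13 : br (e6 1) (e6 3) = lam • e6 1)            -- [x^1, X_0] = λ x^1
    (h14 : br (e6 1) (e6 4) = (-lam) • e6 0 + e6 3)  -- [x^1, X_1] = −λ x^0 + X_0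
    (h15 : br (e6 1) (e6 5) = 0)                     -- [x^1, X_2] = 0
    (h23 : br (e6 2) (e6 3) = (-(lam * rho)) • e6 2) -- [x^2, X_0] = −λρ x^2
    (h24 : br (e6 2) (e6 4) = 0)                     -- [x^2, X_1] = 0
    (h25 : br (e6 2) (e6 5) = (rho * lam) • e6 0 + rho • e6 3)
                                                     -- [x^2, X_2] = ρ(λ x^0 + X_0)
    (h34 : br (e6 3) (e6 4) = lam • e6 4)            -- [X_0, X_1] = λ X_1
    (h35 : br (e6 3) (e6 5) = (-(lam * rho)) • e6 5) -- [X_0, X_2] = −λρ X_2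
    (h45 : br (e6 4) (e6 5) = 0) :                   -- [X_1, X_2] = 0
    ∃ φ : (Fin 6 → ℝ) →ₗ[ℝ] (Matrix (Fin 2) (Fin 2) ℝ × Matrix (Fin 2) (Fin 2) ℝ),
      Function.Injective φ ∧
      Set.range φ = {p | p.1.trace = 0 ∧ p.2.trace = 0} ∧
      ∀ u v, φ (br u v) = φ u * φ v - φ v * φ u := by
  refine ⟨phiL lam rho, ?_, ?_, ?_⟩
  · -- injectivity
    rw [injective_iff_map_eq_zero]
    intro v h
    have h1 : (phiL lam rho v).1 = 0 := by rw [h]; rfl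
    have h2 : (phiL lam rho v).2 = 0 := by rw [h]; rfl
    have e1 := congrFun (congrFun h1 1) 0
    have e4 := congrFun (congrFun h1 0) 1
    have e2 := congrFun (congrFun h2 0) 1
    have e5 := congrFun (congrFun h2 1) 0
    have d1 := congrFun (congrFun h1 0) 0
    have d2 := congrFun (congrFun h2 0) 0
    simp [phiL] at e1 e4 e2 e5 d1 d2
    have hv4 : v 4 = 0 := e4.resolve_left hlam
    have hv5 : v 5 = 0 := e5.resolve_left (by simp [hlam, hrho])
    have h3 : v 0 + lam * v 3 = 0 := by
      have h4 : rho * (v 0 + lam * v 3) = rho * 0 := by ring_nf; linarith [d2]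
      exact mul_left_cancel₀ hrho h4
    have hv0 : v 0 = 0 := by linarith [d1]
    have hv3 : v 3 = 0 := by
      have : lam * v 3 = 0 := by linarith
      exact (mul_eq_zero.mp this).resolve_left hlam
    ext i; fin_cases i <;> simp only [Pi.zero_apply] <;> assumption
  · -- range
    ext p
    constructor
    · rintro ⟨v, rfl⟩
      constructor <;> simp [Matrix.trace_fin_two] <;> ring
    · rintro ⟨hP, hQ⟩
      obtain ⟨P, Q⟩ := p
      simp [Matrix.trace_fin_two] at hP hQ
      have hP' : P 1 1 = -P 0 0 := by linarith
      have hQ' : Q 1 1 = -Q 0 0 := by linarith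
      refine ⟨![-(P 0 0) + Q 0 0 / rho, P 1 0, Q 0 1,
        (P 0 0 + Q 0 0 / rho) / lam, -(P 0 1) / lam, Q 1 0 / (lam * rho^2)], ?_⟩
      refine Prod.ext ?_ ?_ <;>
        · ext i j
          fin_cases i <;> fin_cases j <;>
            (simp [Matrix.cons_val_succ, hP', hQ']; try field_simp; try ring)
  · -- bracket
    have hskew : ∀ u, br u u = 0 := by
      intro u
      have h := hanti u u
      have h2 : (2:ℝ) • br u u = 0 := by
        rw [two_smul]; nth_rewrite 2 [h]; simp
      simpa using (smul_eq_zero.mp h2).resolve_left (by norm_num)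
    have symm : ∀ i j : Fin 6,
        (phiL lam rho) (br (e6 i) (e6 j)) = (phiL lam rho) (e6 i) * (phiL lam rho) (e6 j) - (phiL lam rho) (e6 j) * (phiL lam rho) (e6 i) →
        (phiL lam rho) (br (e6 j) (e6 i)) = (phiL lam rho) (e6 j) * (phiL lam rho) (e6 i) - (phiL lam rho) (e6 i) * (phiL lam rho) (e6 j) := by
      intro i j h
      rw [hanti, map_neg, h, neg_sub]
    have cdiag : ∀ i : Fin 6,
        (phiL lam rho) (br (e6 i) (e6 i)) = (phiL lam rho) (e6 i) * (phiL lam rho) (e6 i) - (phiL lam rho) (e6 i) * (phiL lam rho) (e6 i) := by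
      intro i; rw [hskew, map_zero, sub_self]
    have c01 : (phiL lam rho) (br (e6 0) (e6 1)) = (phiL lam rho) (e6 0) * (phiL lam rho) (e6 1) - (phiL lam rho) (e6 1) * (phiL lam rho) (e6 0) := by
      rw [h01]; exact comm01 lam rho
    have c02 : (phiL lam rho) (br (e6 0) (e6 2)) = (phiL lam rho) (e6 0) * (phiL lam rho) (e6 2) - (phiL lam rho) (e6 2) * (phiL lam rho) (e6 0) := by
      rw [h02]; exact comm02 lam rho
    have c03 : (phiL lam rho) (br (e6 0) (e6 3)) = (phiL lam rho) (e6 0) * (phiL lam rho) (e6 3) - (phiL lam rho) (e6 3) * (phiL lam rho) (e6 0) := by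
      rw [h03]; exact comm03 lam rho
    have c04 : (phiL lam rho) (br (e6 0) (e6 4)) = (phiL lam rho) (e6 0) * (phiL lam rho) (e6 4) - (phiL lam rho) (e6 4) * (phiL lam rho) (e6 0) := by
      rw [h04]; exact comm04 lam rho
    have c05 : (phiL lam rho) (br (e6 0) (e6 5)) = (phiL lam rho) (e6 0) * (phiL lam rho) (e6 5) - (phiL lam rho) (e6 5) * (phiL lam rho) (e6 0) := by
      rw [h05]; exact comm05 lam rho
    have c12 : (phiL lam rho) (br (e6 1) (e6 2)) = (phiL lam rho) (e6 1) * (phiL lam rho) (e6 2) - (phiL lam rho) (e6 2) * (phiL lam rho) (e6 1) := by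
      rw [h12]; exact comm12 lam rho
    have c13 : (phiL lam rho) (br (e6 1) (e6 3)) = (phiL lam rho) (e6 1) * (phiL lam rho) (e6 3) - (phiL lam rho) (e6 3) * (phiL lam rho) (e6 1) := by
      rw [h13]; exact comm13 lam rho
    have c14 : (phiL lam rho) (br (e6 1) (e6 4)) = (phiL lam rho) (e6 1) * (phiL lam rho) (e6 4) - (phiL lam rho) (e6 4) * (phiL lam rho) (e6 1) := by
      rw [h14]; exact comm14 lam rho
    have c15 : (phiL lam rho) (br (e6 1) (e6 5)) = (phiL lam rho) (e6 1) * (phiL lam rho) (e6 5) - (phiL lam rho) (e6 5) * (phiL lam rho) (e6 1) := by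
      rw [h15]; exact comm15 lam rho
    have c23 : (phiL lam rho) (br (e6 2) (e6 3)) = (phiL lam rho) (e6 2) * (phiL lam rho) (e6 3) - (phiL lam rho) (e6 3) * (phiL lam rho) (e6 2) := by
      rw [h23]; exact comm23 lam rho
    have c24 : (phiL lam rho) (br (e6 2) (e6 4)) = (phiL lam rho) (e6 2) * (phiL lam rho) (e6 4) - (phiL lam rho) (e6 4) * (phiL lam rho) (e6 2) := by
      rw [h24]; exact comm24 lam rho
    have c25 : (phiL lam rho) (br (e6 2) (e6 5)) = (phiL lam rho) (e6 2) * (phiL lam rho) (e6 5) - (phiL lam rho) (e6 5) * (phiL lam rho) (e6 2) := by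
      rw [h25]; exact comm25 lam rho
    have c34 : (phiL lam rho) (br (e6 3) (e6 4)) = (phiL lam rho) (e6 3) * (phiL lam rho) (e6 4) - (phiL lam rho) (e6 4) * (phiL lam rho) (e6 3) := by
      rw [h34]; exact comm34 lam rho
    have c35 : (phiL lam rho) (br (e6 3) (e6 5)) = (phiL lam rho) (e6 3) * (phiL lam rho) (e6 5) - (phiL lam rho) (e6 5) * (phiL lam rho) (e6 3) := by
      rw [h35]; exact comm35 lam rho
    have c45 : (phiL lam rho) (br (e6 4) (e6 5)) = (phiL lam rho) (e6 4) * (phiL lam rho) (e6 5) - (phiL lam rho) (e6 5) * (phiL lam rho) (e6 4) := by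
      rw [h45]; exact comm45 lam rho
    have hbasis : ∀ i j : Fin 6,
        (phiL lam rho) (br (e6 i) (e6 j)) = (phiL lam rho) (e6 i) * (phiL lam rho) (e6 j) - (phiL lam rho) (e6 j) * (phiL lam rho) (e6 i) := by
      intro i j
      fin_cases i <;> fin_cases j
      exacts [cdiag _, c01, c02, c03, c04, c05,
        symm _ _ c01, cdiag _, c12, c13, c14, c15,
        symm _ _ c02, symm _ _ c12, cdiag _, c23, c24, c25,
        symm _ _ c03, symm _ _ c13, symm _ _ c23, cdiag _, c34, c35,
        symm _ _ c04, symm _ _ c14, symm _ _ c24, symm _ _ c34, cdiag _, c45,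
        symm _ _ c05, symm _ _ c15, symm _ _ c25, symm _ _ c35, symm _ _ c45, cdiag _]
    -- bilinear extension
    set A := Matrix (Fin 2) (Fin 2) ℝ × Matrix (Fin 2) (Fin 2) ℝ
    have bfun : ∀ i : Fin 6, (Pi.basisFun ℝ (Fin 6)) i = e6 i := by
      intro i; simp [e6, Pi.basisFun_apply]
    have main : br.compr₂ (phiL lam rho) =
        (LinearMap.mul ℝ A).compl₁₂ (phiL lam rho) (phiL lam rho) - ((LinearMap.mul ℝ A).compl₁₂ (phiL lam rho) (phiL lam rho)).flip := by
      apply LinearMap.ext_basis (Pi.basisFun ℝ (Fin 6)) (Pi.basisFun ℝ (Fin 6))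
      intro i j
      simp only [bfun, LinearMap.compr₂_apply, LinearMap.sub_apply, LinearMap.compl₁₂_apply,
        LinearMap.flip_apply, LinearMap.mul_apply']
      exact hbasis i j
    intro u v
    have := LinearMap.congr_fun (LinearMap.congr_fun main u) v
    simpa only [LinearMap.compr₂_apply, LinearMap.sub_apply, LinearMap.compl₁₂_apply,
      LinearMap.flip_apply, LinearMap.mul_apply'] using this
end

section
/- Let ω = ±1. The 6-dimensional real Lie algebra with basis {x^0, x^1, x^2, X_0, X_1, X_2} and nonzero brackets [x^1,x^2] = x^0, [X_0,X_1] = ω X_2, [x^1,X_0] = −X_2, [x^2,X_0] = ω x^1 + X_1, [x^2,X_1] = −ω x^0 (all other brackets of basis elements vanish) is a nilpotent Lie algebra. -/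
/-- The lower central series of the bracket algebra `(ℝ⁶, br)`:
`C⁰ = ℝ⁶` and `C^{k+1} = span [ℝ⁶, C^k]`. -/
def lowerCentralSeriesOf (br : (Fin 6 → ℝ) →ₗ[ℝ] (Fin 6 → ℝ) →ₗ[ℝ] (Fin 6 → ℝ)) :
    ℕ → Submodule ℝ (Fin 6 → ℝ)
  | 0 => ⊤
  | k + 1 => Submodule.span ℝ
      {w | ∃ u, ∃ v ∈ lowerCentralSeriesOf br k, w = br u v}

/-- The Drinfel'd double of type `(n_3, n_3)` (Table V, fourth column), with
`ω = ±1`, is a nilpotent Lie algebra: its lower central series terminates at zero. -/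
theorem dd_n3_n3_nilpotent (om : ℝ) (hom : om = 1 ∨ om = -1)
    (br : (Fin 6 → ℝ) →ₗ[ℝ] (Fin 6 → ℝ) →ₗ[ℝ] (Fin 6 → ℝ))
    (hanti : ∀ u v, br u v = - br v u)
    (hjac : ∀ u v w, br u (br v w) + br v (br w u) + br w (br u v) = 0)
    (h01 : br (e6 0) (e6 1) = 0)                     -- [x^0, x^1] = 0
    (h02 : br (e6 0) (e6 2) = 0)                     -- [x^0, x^2] = 0
    (h03 : br (e6 0) (e6 3) = 0)                     -- [x^0, X_0] = 0
    (h04 : br (e6 0) (e6 4) = 0)                     -- [x^0, X_1] = 0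
    (h05 : br (e6 0) (e6 5) = 0)                     -- [x^0, X_2] = 0
    (h12 : br (e6 1) (e6 2) = e6 0)                  -- [x^1, x^2] = x^0
    (h13 : br (e6 1) (e6 3) = -(e6 5))               -- [x^1, X_0] = −X_2
    (h14 : br (e6 1) (e6 4) = 0)                     -- [x^1, X_1] = 0
    (h15 : br (e6 1) (e6 5) = 0)                     -- [x^1, X_2] = 0
    (h23 : br (e6 2) (e6 3) = om • e6 1 + e6 4)      -- [x^2, X_0] = ω x^1 + X_1
    (h24 : br (e6 2) (e6 4) = (-om) • e6 0)          -- [x^2, X_1] = −ω x^0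
    (h25 : br (e6 2) (e6 5) = 0)                     -- [x^2, X_2] = 0
    (h34 : br (e6 3) (e6 4) = om • e6 5)             -- [X_0, X_1] = ω X_2
    (h35 : br (e6 3) (e6 5) = 0)                     -- [X_0, X_2] = 0
    (h45 : br (e6 4) (e6 5) = 0) :                   -- [X_1, X_2] = 0
    ∃ k : ℕ, lowerCentralSeriesOf br k = ⊥ := by
  refine ⟨3, ?_⟩
  have hself : ∀ u, br u u = 0 := by
    intro u
    funext i
    have := congrFun (hanti u u) i
    simp only [Pi.neg_apply, Pi.zero_apply] at this ⊢
    linarith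
  have hrep : ∀ u : Fin 6 → ℝ, u = ∑ i, u i • e6 i := by
    intro u
    simp [e6, ← Pi.single_smul, Finset.univ_sum_single]
  have hmem : ∀ (p : Submodule ℝ (Fin 6 → ℝ)),
      (∀ i j, br (e6 i) (e6 j) ∈ p) → ∀ u v, br u v ∈ p := by
    intro p hp u v
    rw [hrep u, hrep v]
    simp only [map_sum, map_smul, LinearMap.sum_apply, LinearMap.smul_apply]
    exact Submodule.sum_mem _ fun j _ => Submodule.smul_mem _ _
      (Submodule.sum_mem _ fun i _ => Submodule.smul_mem _ _ (hp i j))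
  have h10 : br (e6 1) (e6 0) = 0 := by rw [hanti, h01, neg_zero]
  have h20 : br (e6 2) (e6 0) = 0 := by rw [hanti, h02, neg_zero]
  have h30 : br (e6 3) (e6 0) = 0 := by rw [hanti, h03, neg_zero]
  have h40 : br (e6 4) (e6 0) = 0 := by rw [hanti, h04, neg_zero]
  have h50 : br (e6 5) (e6 0) = 0 := by rw [hanti, h05, neg_zero]
  have h21 : br (e6 2) (e6 1) = -(e6 0) := by rw [hanti, h12]
  have h31 : br (e6 3) (e6 1) = e6 5 := by rw [hanti, h13, neg_neg]
  have h41 : br (e6 4) (e6 1) = 0 := by rw [hanti, h14, neg_zero]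
  have h51 : br (e6 5) (e6 1) = 0 := by rw [hanti, h15, neg_zero]
  have h32 : br (e6 3) (e6 2) = -(om • e6 1 + e6 4) := by rw [hanti, h23]
  have h42 : br (e6 4) (e6 2) = -((-om) • e6 0) := by rw [hanti, h24]
  have h52 : br (e6 5) (e6 2) = 0 := by rw [hanti, h25, neg_zero]
  have h43 : br (e6 4) (e6 3) = -(om • e6 5) := by rw [hanti, h34]
  have h53 : br (e6 5) (e6 3) = 0 := by rw [hanti, h35, neg_zero]
  have h54 : br (e6 5) (e6 4) = 0 := by rw [hanti, h45, neg_zero]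
  have h00 := hself (e6 0)
  have h11 := hself (e6 1)
  have h22 := hself (e6 2)
  have h33 := hself (e6 3)
  have h44 := hself (e6 4)
  have h55 := hself (e6 5)
  have hz0 : ∀ u, br u (e6 0) = 0 := by
    intro u
    rw [hrep u]
    simp [Fin.sum_univ_six, LinearMap.add_apply, LinearMap.smul_apply,
      h00, h10, h20, h30, h40, h50]
  have hz5 : ∀ u, br u (e6 5) = 0 := by
    intro u
    rw [hrep u]
    simp [Fin.sum_univ_six, LinearMap.add_apply, LinearMap.smul_apply,
      h05, h15, h25, h35, h45, h55]
  set S1 : Submodule ℝ (Fin 6 → ℝ) :=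
    Submodule.span ℝ {e6 0, e6 5, om • e6 1 + e6 4} with hS1
  set S2 : Submodule ℝ (Fin 6 → ℝ) := Submodule.span ℝ {e6 0, e6 5} with hS2
  have m0 : e6 0 ∈ S1 := Submodule.subset_span (by simp)
  have m5 : e6 5 ∈ S1 := Submodule.subset_span (by simp)
  have m14 : om • e6 1 + e6 4 ∈ S1 := Submodule.subset_span (by simp)
  have n0 : e6 0 ∈ S2 := Submodule.subset_span (by simp)
  have n5 : e6 5 ∈ S2 := Submodule.subset_span (by simp)
  have fk0 : (⟨0, by omega⟩ : Fin 6) = 0 := rfl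
  have fk1 : (⟨1, by omega⟩ : Fin 6) = 1 := rfl
  have fk2 : (⟨2, by omega⟩ : Fin 6) = 2 := rfl
  have fk3 : (⟨3, by omega⟩ : Fin 6) = 3 := rfl
  have fk4 : (⟨4, by omega⟩ : Fin 6) = 4 := rfl
  have fk5 : (⟨5, by omega⟩ : Fin 6) = 5 := rfl
  have hC1 : lowerCentralSeriesOf br 1 ≤ S1 := by
    show Submodule.span ℝ _ ≤ S1
    rw [Submodule.span_le]
    rintro w ⟨u, v, -, rfl⟩
    refine hmem S1 ?_ u v
    intro i j
    fin_cases i <;> fin_cases j <;>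
      simp only [fk0, fk1, fk2, fk3, fk4, fk5,
        h00, h01, h02, h03, h04, h05, h10, h11, h12, h13, h14, h15,
        h20, h21, h22, h23, h24, h25, h30, h31, h32, h33, h34, h35,
        h40, h41, h42, h43, h44, h45, h50, h51, h52, h53, h54, h55] <;>
      first
        | exact zero_mem _
        | exact m0
        | exact m5
        | exact m14
        | exact neg_mem m0
        | exact neg_mem m5
        | exact neg_mem m14
        | exact Submodule.smul_mem _ _ m0
        | exact Submodule.smul_mem _ _ m5
        | exact neg_mem (Submodule.smul_mem _ _ m0)
        | exact neg_mem (Submodule.smul_mem _ _ m5)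
        | trivial
  have hb14 : ∀ i, br (e6 i) (om • e6 1 + e6 4) ∈ S2 := by
    intro i
    fin_cases i <;>
      simp only [fk0, fk1, fk2, fk3, fk4, fk5, map_add, map_smul,
        h01, h04, h11, h14, h21, h24, h31, h34, h41, h44, h51, h54] <;>
      first
        | (simp; done)
        | exact add_mem (Submodule.smul_mem _ _ (neg_mem n0)) (Submodule.smul_mem _ _ n0)
        | exact add_mem (neg_mem (Submodule.smul_mem _ _ n0)) (neg_mem (Submodule.smul_mem _ _ n0))
        | exact add_mem (neg_mem (Submodule.smul_mem _ _ n5)) (neg_mem (Submodule.smul_mem _ _ n5))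
        | exact add_mem (Submodule.smul_mem _ _ n5) (Submodule.smul_mem _ _ n5)
  have hS1S2 : ∀ u v, v ∈ S1 → br u v ∈ S2 := by
    intro u v hv
    have hle : S1 ≤ Submodule.comap (br u) S2 := by
      rw [hS1, Submodule.span_le]
      rintro x hx
      simp only [Set.mem_insert_iff, Set.mem_singleton_iff] at hx
      simp only [SetLike.mem_coe, Submodule.mem_comap]
      rcases hx with rfl | rfl | rfl
      · rw [hz0]; exact zero_mem _
      · rw [hz5]; exact zero_mem _
      · rw [hrep u]
        simp only [map_sum, map_smul, LinearMap.sum_apply, LinearMap.smul_apply]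
        exact Submodule.sum_mem _ fun i _ => Submodule.smul_mem _ _ (hb14 i)
    exact hle hv
  have hcen : ∀ u v, v ∈ S2 → br u v = 0 := by
    intro u v hv
    have hle : S2 ≤ LinearMap.ker (br u) := by
      rw [hS2, Submodule.span_le]
      rintro x hx
      simp only [Set.mem_insert_iff, Set.mem_singleton_iff] at hx
      simp only [SetLike.mem_coe, LinearMap.mem_ker]
      rcases hx with rfl | rfl
      · exact hz0 u
      · exact hz5 u
    exact hle hv
  have hC2 : lowerCentralSeriesOf br 2 ≤ S2 := by
    show Submodule.span ℝ _ ≤ S2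
    rw [Submodule.span_le]
    rintro w ⟨u, v, hv, rfl⟩
    exact hS1S2 u v (hC1 hv)
  rw [eq_bot_iff]
  show Submodule.span ℝ _ ≤ ⊥
  rw [Submodule.span_le]
  rintro w ⟨u, v, hv, rfl⟩
  simp [hcen u v (hC2 hv)]
end
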